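/- arXiv:2404.16517 — 8 statements merged into one kernel-verified Lean document; each statement's English description precedes it below -/
import Mathlib

section
/- Let S₁,…,S_{p'} be sorted arrays over a linearly ordered set whose m elements are pairwise distinct, let v, r be positive integers such that p'(v+1) is a multiple of r and ω := m/(p'(v+1)) is a positive integer. Suppose each array Sᵢ carries an ω-dense set Pᵢ of sampled positions, with total number of samples ∑ᵢ|Pᵢ| = p'(v+1). Let V be the sorted list of all sampled values and define splitters f_j := V[j·p'(v+1)/r − 1] for j = 1,…,r−1. Define buckets B⁰ := {s : s ≤ f₁}, Bʲ := {s : f_j < s ≤ f_{j+1}} for 0 < j < r−1, and B^{r−1} := {s : f_{r−1} < s}, where s ranges over all m elements. Then every bucket satisfies |Bʲ| ≤ (1 + r/v)·m/r. -/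
lemma len_filter_card {α : Type*} (L : List α) (p : α → Bool) :
    (L.filter p).length = (Finset.univ.filter (fun i : Fin L.length => p (L.get i))).card := by
  conv_lhs => rw [← List.map_get_finRange L]
  rw [List.filter_map, List.length_map,
    ← List.toFinset_card_of_nodup (List.Nodup.filter _ (List.nodup_finRange L.length)),
    List.toFinset_filter, List.toFinset_finRange]
  rfl

lemma filter_flatten' {α : Type*} (L : List (List α)) (p : α → Bool) :
    L.flatten.filter p = (L.map (List.filter p)).flatten := by
  induction L with
  | nil => simp
  | cons a l ih => simp [List.filter_append, ih]

lemma card_le_of_val_mem {N lo hi : ℕ} (S : Finset (Fin N))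
    (h : ∀ i ∈ S, lo ≤ i.val ∧ i.val < hi) : S.card ≤ hi - lo := by
  calc S.card ≤ (Finset.Ico lo hi).card := by
        apply Finset.card_le_card_of_injOn Fin.val
        · intro i hi'; exact Finset.mem_Ico.2 (h i hi')
        · intro a _ b _ hab; exact Fin.val_injective hab
    _ = hi - lo := Nat.card_Ico lo hi

lemma block_bound {α : Type*} [LinearOrder α] (L : List α) (hL : L.Pairwise (· < ·))
    (p : α → Bool) (hconv : ∀ a b c : α, a ≤ b → b ≤ c → p a → p c → p b)
    (ω : ℕ) (hω : 0 < ω) (P : Finset ℕ)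
    (hdense : ∀ a, a + ω ≤ L.length → ∃ x ∈ P, a ≤ x ∧ x < a + ω) :
    (L.filter p).length <
      ((P.filter (fun idx => ((L[idx]?).elim false p))).card + 1) * ω := by
  classical
  set n := L.length with hn
  set T : Finset (Fin n) := Finset.univ.filter (fun i => p (L.get i)) with hT
  set k := (P.filter (fun idx => ((L[idx]?).elim false p))).card with hk
  rw [len_filter_card]
  rw [← hT]
  rcases T.eq_empty_or_nonempty with h | h
  · rw [h]; simpa using Nat.lt_of_lt_of_le hω (Nat.le_mul_of_pos_left ω (Nat.succ_pos k))
  · set a := T.min' h with ha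
    set M := T.max' h with hM
    have haM : a ≤ M := T.min'_le M (T.max'_mem h)
    have hTmem : ∀ i : Fin n, i ∈ T ↔ p (L.get i) := by
      intro i; simp [hT]
    have hTIcc : T = Finset.Icc a M := by
      ext i
      rw [Finset.mem_Icc]
      constructor
      · intro hi; exact ⟨T.min'_le i hi, T.le_max' i hi⟩
      · rintro ⟨h1, h2⟩
        rw [hTmem]
        exact hconv (L.get a) (L.get i) (L.get M)
          (hL.sortedLT.strictMono_get.monotone h1) (hL.sortedLT.strictMono_get.monotone h2)
          ((hTmem a).1 (T.min'_mem h)) ((hTmem M).1 (T.max'_mem h))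
    have hcard : T.card = M.val + 1 - a.val := by rw [hTIcc, Fin.card_Icc]
    set b := T.card with hb
    have hab : a.val + b = M.val + 1 := by omega
    have habn : a.val + b ≤ n := by
      have := M.isLt; omega
    have Hwin : ∀ t, t < b / ω → ∃ x ∈ P, a.val + t * ω ≤ x ∧ x < a.val + t * ω + ω := by
      intro t ht
      apply hdense
      have h1 : (t + 1) * ω ≤ (b / ω) * ω := Nat.mul_le_mul_right ω ht
      have h2 : (b / ω) * ω ≤ b := Nat.div_mul_le_self b ω
      have : t * ω + ω ≤ b := by nlinarith [h1, h2]
      omega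
    choose g hg1 hg2 hg3 using Hwin
    have hinj : (Finset.range (b / ω)).card ≤ k := by
      rw [hk]
      apply Finset.card_le_card_of_injOn (fun t => if h : t < b / ω then g t h else 0)
      · intro t ht
        simp only [Finset.mem_coe, Finset.mem_range] at ht ⊢
        rw [dif_pos ht]
        rw [Finset.mem_filter]
        refine ⟨hg1 t ht, ?_⟩
        have hx1 := hg2 t ht
        have hx2 := hg3 t ht
        have hxb : g t ht < a.val + b := by
          have h1 : (t + 1) * ω ≤ (b / ω) * ω := Nat.mul_le_mul_right ω ht
          have h2 : (b / ω) * ω ≤ b := Nat.div_mul_le_self b ω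
          nlinarith
        have hxn : g t ht < n := lt_of_lt_of_le hxb habn
        have : (⟨g t ht, hxn⟩ : Fin n) ∈ T := by
          rw [hTIcc, Finset.mem_Icc]
          simp only [Fin.le_def]
          refine ⟨le_trans (Nat.le_add_right _ _) (hg2 t ht), by omega⟩
        have hp : p (L.get ⟨g t ht, hxn⟩) := (hTmem _).1 this
        have : L[g t ht]? = some (L.get ⟨g t ht, hxn⟩) := by
          rw [List.getElem?_eq_getElem hxn]; rfl
        rw [this]
        simpa using hp
      · intro t1 h1 t2 h2 heq
        simp only [Finset.mem_coe, Finset.mem_range] at h1 h2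
        simp only at heq
        rw [dif_pos h1, dif_pos h2] at heq
        by_contra hne
        rcases Nat.lt_or_ge t1 t2 with hlt | hge
        · have e1 := hg3 t1 h1
          have e2 := hg2 t2 h2
          have e3 : (t1 + 1) * ω ≤ t2 * ω := Nat.mul_le_mul_right ω hlt
          have e4 : (t1 + 1) * ω = t1 * ω + ω := by ring
          rw [heq] at e1
          omega
        · have hlt : t2 < t1 := by omega
          have e1 := hg3 t2 h2
          have e2 := hg2 t1 h1
          have e3 : (t2 + 1) * ω ≤ t1 * ω := Nat.mul_le_mul_right ω hlt
          have e4 : (t2 + 1) * ω = t2 * ω + ω := by ring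
          rw [← heq] at e1
          omega
    rw [Finset.card_range] at hinj
    have : b / ω < k + 1 := by omega
    exact (Nat.div_lt_iff_lt_mul hω).1 this

/-- **Single-level string-based partitioning bound.**
`p'` sorted arrays `S i` over a linear order, all `m` elements pairwise
distinct; `ω := m/(p'(v+1))` a positive integer, `r ∣ p'(v+1)`; each array
carries an `ω`-dense set `P i` of sampled positions, `∑ᵢ |P i| = p'(v+1)`;
`V` is the sorted list of all sampled values,
splitters `f j = V[j·p'(v+1)/r − 1]` for `1 ≤ j ≤ r−1`, and
bucket `B j = {s | (j = 0 ∨ f j < s) ∧ (j = r−1 ∨ s ≤ f (j+1))}`.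
Then `|B j| ≤ (1 + r/v) · m / r`. -/
theorem string_based_partitioning {α : Type*} [LinearOrder α]
    (p' v r m : ℕ) (hp' : 0 < p') (hv : 0 < v) (hr : 0 < r)
    (S : Fin p' → List α)
    (hsorted : ∀ i, (S i).Pairwise (· < ·))
    (hdistinct : ((List.ofFn S).flatten).Nodup)
    (hm : m = ∑ i, (S i).length)
    (hdvd : r ∣ p' * (v + 1))
    (ω : ℕ) (hω : 0 < ω) (hωdef : m = p' * (v + 1) * ω)
    (P : Fin p' → Finset ℕ)
    (hPsub : ∀ i, P i ⊆ Finset.range (S i).length)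
    (hdense : ∀ i, ∀ a : ℕ, a + ω ≤ (S i).length → ∃ x ∈ P i, a ≤ x ∧ x < a + ω)
    (hcard : ∑ i, (P i).card = p' * (v + 1))
    (V : List α)
    (hVsorted : V.Pairwise (· < ·))
    (hVlen : V.length = p' * (v + 1))
    (hVmem : ∀ x : α, x ∈ V ↔ ∃ i : Fin p', ∃ j ∈ P i,
      ∃ hj : j < (S i).length, (S i).get ⟨j, hj⟩ = x)
    (f : ℕ → α)
    (hf : ∀ j : ℕ, 1 ≤ j → j ≤ r - 1 →
      ∀ hidx : j * (p' * (v + 1)) / r - 1 < V.length,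
        f j = V.get ⟨j * (p' * (v + 1)) / r - 1, hidx⟩)
    (j : ℕ) (hj : j < r) :
    ((((List.ofFn S).flatten).filter
        (fun s => decide ((j = 0 ∨ f j < s) ∧ (j = r - 1 ∨ s ≤ f (j + 1))))).length : ℝ)
      ≤ (1 + (r : ℝ) / (v : ℝ)) * (m : ℝ) / (r : ℝ) := by
  classical
  set pb : α → Bool := fun s => decide ((j = 0 ∨ f j < s) ∧ (j = r - 1 ∨ s ≤ f (j + 1)))
    with hpb
  have hpbIff : ∀ s : α, pb s = true ↔ ((j = 0 ∨ f j < s) ∧ (j = r - 1 ∨ s ≤ f (j + 1))) := by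
    intro s; rw [hpb]; exact decide_eq_true_iff
  set N := p' * (v + 1) with hN
  have hNpos : 0 < N := by positivity
  obtain ⟨Nr, hNr⟩ := hdvd
  have hNrpos : 0 < Nr := by
    rcases Nat.eq_zero_or_pos Nr with h | h
    · rw [h, Nat.mul_zero] at hNr; omega
    · exact h
  -- splitter characterization
  have hfj : ∀ jj : ℕ, 1 ≤ jj → jj ≤ r - 1 →
      ∃ hidx : jj * Nr - 1 < V.length, f jj = V.get ⟨jj * Nr - 1, hidx⟩ := by
    intro jj h1 h2
    have hidx' : jj * N / r = jj * Nr := by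
      rw [hNr]
      rw [show jj * (r * Nr) = r * (jj * Nr) by ring]
      exact Nat.mul_div_cancel_left _ hr
    have hlt : jj * Nr - 1 < V.length := by
      rw [hVlen, hNr]
      have : jj * Nr ≤ (r - 1) * Nr := Nat.mul_le_mul_right Nr h2
      have e : (r - 1) * Nr = r * Nr - Nr := Nat.sub_one_mul r Nr
      have hle : Nr ≤ r * Nr := Nat.le_mul_of_pos_left Nr hr
      omega
    have hlt' : jj * N / r - 1 < V.length := by rw [hidx']; exact hlt
    refine ⟨hlt, ?_⟩
    rw [hf jj h1 h2 hlt']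
    congr 1
    exact Fin.ext (by simp [hidx'])
  -- count of bucket samples in V
  have hVcount : (V.filter pb).length ≤ Nr := by
    rw [len_filter_card]
    set lo := if j = 0 then 0 else j * Nr with hlo
    set hi := if j = r - 1 then N else (j + 1) * Nr with hhi
    have hmono := hVsorted.sortedLT.strictMono_get
    have step : ∀ i ∈ (Finset.univ.filter (fun i : Fin V.length => pb (V.get i))),
        lo ≤ i.val ∧ i.val < hi := by
      intro i hi'
      rw [Finset.mem_filter] at hi'
      obtain ⟨hA, hB⟩ := (hpbIff (V.get i)).1 hi'.2
      constructor
      · rw [hlo]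
        rcases hA with h0 | hflt
        · simp [h0]
        by_cases h0 : j = 0
        · simp [h0]
        · simp only [h0, if_false]
          have hj1 : 1 ≤ j := by omega
          have hj2 : j ≤ r - 1 := by omega
          obtain ⟨hidx, hfeq⟩ := hfj j hj1 hj2
          rw [hfeq] at hflt
          by_contra hcon
          push_neg at hcon
          have hjNr : 1 ≤ j * Nr := by
            have := Nat.mul_le_mul hj1 hNrpos
            omega
          have : i.val ≤ j * Nr - 1 := by omega
          have : V.get i ≤ V.get ⟨j * Nr - 1, hidx⟩ := by
            apply hmono.monotone
            exact this
          exact absurd (lt_of_lt_of_le hflt this) (lt_irrefl _)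
      · rw [hhi]
        by_cases hlast : j = r - 1
        · simp only [hlast, if_true]
          exact lt_of_lt_of_le i.isLt (le_of_eq hVlen)
        · simp only [hlast, if_false]
          rcases hB with h0 | hle
          · exact absurd h0 hlast
          have hj1 : 1 ≤ j + 1 := by omega
          have hj2 : j + 1 ≤ r - 1 := by omega
          obtain ⟨hidx, hfeq⟩ := hfj (j + 1) hj1 hj2
          rw [hfeq] at hle
          by_contra hcon
          push_neg at hcon
          have : (⟨(j + 1) * Nr - 1, hidx⟩ : Fin V.length) < i := by
            rw [Fin.lt_def]
            simp only
            have hjNr : 1 ≤ (j + 1) * Nr := by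
              have := Nat.mul_le_mul hj1 hNrpos
              omega
            omega
          have := hmono this
          exact absurd (lt_of_le_of_lt hle this) (lt_irrefl _)
    have := card_le_of_val_mem _ step
    refine le_trans this ?_
    rw [hlo, hhi]
    by_cases h0 : j = 0 <;> by_cases hlast : j = r - 1
    · rw [if_pos h0, if_pos hlast]
      have hr1 : r = 1 := by omega
      rw [hNr, hr1, one_mul]
      omega
    · rw [if_pos h0, if_neg hlast, h0]
      simp
    · rw [if_neg h0, if_pos hlast, hNr, hlast]
      have e : (r - 1) * Nr = r * Nr - Nr := Nat.sub_one_mul r Nr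
      have hle : Nr ≤ r * Nr := Nat.le_mul_of_pos_left Nr hr
      omega
    · rw [if_neg h0, if_neg hlast]
      have e1 : (j + 1) * Nr = j * Nr + Nr := by ring
      omega
  -- injectivity of values across lists
  have hget_inj : ∀ (i1 i2 : Fin p') (x1 x2 : ℕ) (h1 : x1 < (S i1).length)
      (h2 : x2 < (S i2).length), (S i1).get ⟨x1, h1⟩ = (S i2).get ⟨x2, h2⟩ →
      i1 = i2 ∧ x1 = x2 := by
    intro i1 i2 x1 x2 h1 h2 heq
    rw [List.nodup_flatten] at hdistinct
    obtain ⟨hnd, hdisj⟩ := hdistinct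
    rw [List.pairwise_ofFn] at hdisj
    rcases lt_trichotomy i1 i2 with hlt | heqi | hgt
    · exfalso
      have hd := hdisj hlt
      have m1 : (S i1).get ⟨x1, h1⟩ ∈ S i1 := List.get_mem _ _
      have m2 : (S i1).get ⟨x1, h1⟩ ∈ S i2 := heq ▸ List.get_mem _ _
      exact hd m1 m2
    · subst heqi
      have hndi : (S i1).Nodup := (hsorted i1).nodup
      have := (List.Nodup.get_inj_iff hndi).1 heq
      exact ⟨rfl, by simpa using this⟩
    · exfalso
      have hd := hdisj hgt
      have m1 : (S i2).get ⟨x2, h2⟩ ∈ S i2 := List.get_mem _ _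
      have m2 : (S i2).get ⟨x2, h2⟩ ∈ S i1 := by rw [← heq]; exact List.get_mem _ _
      exact hd m1 m2
  -- sum of per-list bucket-sample counts is at most the V count
  set Q : Fin p' → Finset ℕ := fun i => (P i).filter (fun idx => (((S i)[idx]?).elim false pb))
    with hQ
  have hsumQ : ∑ i, (Q i).card ≤ (V.filter pb).length := by
    have hVnodup : (V.filter pb).Nodup := (hVsorted.nodup).filter pb
    rw [← List.toFinset_card_of_nodup hVnodup]
    rw [← Finset.card_sigma]
    rw [← Finset.card_image_of_injective ((V.filter pb).toFinset) (Option.some_injective α)]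
    apply Finset.card_le_card_of_injOn (fun x => (S x.1)[x.2]?)
    · rintro ⟨i, idx⟩ hx
      simp only [Finset.mem_coe] at hx ⊢
      rw [Finset.mem_sigma] at hx
      obtain ⟨-, hx⟩ := hx
      rw [hQ, Finset.mem_filter] at hx
      obtain ⟨hmem, hcond⟩ := hx
      have hlt : idx < (S i).length := by
        have := hPsub i hmem
        simpa [Finset.mem_range] using this
      have hsome : (S i)[idx]? = some ((S i).get ⟨idx, hlt⟩) := by
        rw [List.getElem?_eq_getElem hlt]; rfl
      rw [hsome] at hcond ⊢
      simp only [Option.elim] at hcond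
      rw [Finset.mem_image]
      refine ⟨(S i).get ⟨idx, hlt⟩, ?_, rfl⟩
      rw [List.mem_toFinset, List.mem_filter]
      refine ⟨?_, hcond⟩
      rw [hVmem]
      exact ⟨i, idx, hmem, hlt, rfl⟩
    · rintro ⟨i1, x1⟩ hx1 ⟨i2, x2⟩ hx2 heq
      simp only [Finset.mem_coe, Finset.mem_sigma] at hx1 hx2
      obtain ⟨-, hx1⟩ := hx1
      obtain ⟨-, hx2⟩ := hx2
      rw [hQ, Finset.mem_filter] at hx1 hx2
      have h1 : x1 < (S i1).length := by
        have := hPsub i1 hx1.1; simpa [Finset.mem_range] using this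
      have h2 : x2 < (S i2).length := by
        have := hPsub i2 hx2.1; simpa [Finset.mem_range] using this
      simp only at heq
      rw [List.getElem?_eq_getElem h1, List.getElem?_eq_getElem h2] at heq
      have heq' : (S i1).get ⟨x1, h1⟩ = (S i2).get ⟨x2, h2⟩ := by
        simpa using Option.some_injective α heq
      obtain ⟨hi, hx⟩ := hget_inj i1 i2 x1 x2 h1 h2 heq'
      subst hi
      simp [hx]
  -- per-list bound
  have hper : ∀ i : Fin p', ((S i).filter pb).length + 1 ≤ ((Q i).card + 1) * ω := by
    intro i
    have hconv : ∀ a b c : α, a ≤ b → b ≤ c → pb a → pb c → pb b := by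
      intro a b c hab hbc hpa hpc
      rw [hpbIff] at hpa hpc ⊢
      constructor
      · rcases hpa.1 with h0 | h0
        · exact Or.inl h0
        · exact Or.inr (lt_of_lt_of_le h0 hab)
      · rcases hpc.2 with h0 | h0
        · exact Or.inl h0
        · exact Or.inr (le_trans hbc h0)
    have hbb : ((S i).filter pb).length < ((Q i).card + 1) * ω :=
      block_bound (S i) (hsorted i) pb hconv ω hω (P i) (hdense i)
    omega
  -- total length
  have htotal : (((List.ofFn S).flatten).filter pb).length = ∑ i, ((S i).filter pb).length := by
    rw [filter_flatten', List.map_ofFn]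
    rw [List.length_flatten]
    rw [List.map_ofFn]
    rw [List.sum_ofFn]
    rfl
  have hnat : (((List.ofFn S).flatten).filter pb).length ≤ (Nr + p') * ω := by
    rw [htotal]
    have h1 : ∑ i, (((S i).filter pb).length + 1) ≤ ∑ i, ((Q i).card + 1) * ω :=
      Finset.sum_le_sum (fun i _ => hper i)
    have h2 : ∑ i, (((S i).filter pb).length + 1)
        = (∑ i, ((S i).filter pb).length) + p' := by
      rw [Finset.sum_add_distrib]
      simp
    have h3 : ∑ i, ((Q i).card + 1) * ω = ((∑ i, (Q i).card) + p') * ω := by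
      rw [← Finset.sum_mul]
      congr 1
      rw [Finset.sum_add_distrib]
      simp
    have h4 : (∑ i, (Q i).card) ≤ Nr := le_trans hsumQ hVcount
    have h5 : ((∑ i, (Q i).card) + p') * ω ≤ (Nr + p') * ω :=
      Nat.mul_le_mul_right ω (by omega)
    omega
  -- real arithmetic
  have hmval : (m : ℝ) = (r : ℝ) * (Nr : ℝ) * (ω : ℝ) := by
    rw [hωdef, hNr]
    push_cast
    ring
  have hvr : (0 : ℝ) < v := by exact_mod_cast hv
  have hrr : (0 : ℝ) < r := by exact_mod_cast hr
  calc ((((List.ofFn S).flatten).filter pb).length : ℝ)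
      ≤ ((Nr + p') * ω : ℕ) := by exact_mod_cast hnat
    _ ≤ (1 + (r : ℝ) / (v : ℝ)) * (m : ℝ) / (r : ℝ) := by
        push_cast
        have hnat2 : p' * (v + 1) = r * Nr := by rw [← hN]; exact hNr
        have hcast : ((p' : ℝ)) * ((v : ℝ) + 1) = (r : ℝ) * (Nr : ℝ) := by
          exact_mod_cast hnat2
        have expand : (1 + (r : ℝ) / v) * ((r : ℝ) * Nr * ω) / r
            = (Nr : ℝ) * ω + ((r : ℝ) * Nr * ω) / v := by
          field_simp
        rw [hmval, expand]
        have h2 : (p' : ℝ) * ω ≤ ((r : ℝ) * Nr * ω) / v := by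
          rw [le_div_iff₀ hvr, ← hcast]
          have hω0 : (0 : ℝ) ≤ ω := Nat.cast_nonneg ω
          have hp0 : (0 : ℝ) ≤ p' := Nat.cast_nonneg p'
          nlinarith
        have e : ((Nr : ℝ) + p') * ω = (Nr : ℝ) * ω + (p' : ℝ) * ω := by ring
        linarith
end

section
/- Let s₁,…,s_q be a list of strings (finite sequences over an alphabet), each of length at most ℓ̂ ≥ 1, let ‖·‖ denote total number of characters, and let ω' be a positive integer. For a string index x, its start position in the concatenated character array is b_x := ∑_{y<x}|s_y|. Let T ⊆ {1,…,q} be a set of sampled string indices such that the set of start positions {b_x : x ∈ T} is (ω'+ℓ̂)-dense in the character array {0,…,‖(s₁,…,s_q)‖−1}. Then every contiguous range of strings s_a,…,s_b that contains exactly K sampled strings has total character count ∑_{a ≤ x ≤ b}|s_x| ≤ (K+1)·(ω' + ℓ̂). -/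
/-! If a range of strings had more than `(K+1)·ω` characters (`ω = ω' + ℓ̂`), the `K+1`
consecutive length-`ω` windows starting just after the start of its first string would lie
inside its characters; by density each window contains the start of a sampled string, these
strings are distinct and all lie in the range, so the range contains at least `K+1` samples. -/

open Finset

theorem le_card_filter_of_forall_exists_mem_window {ι : Type*} (T : Finset ι) (g : ι → ℕ)
    (c ω n : ℕ)
    (hwin : ∀ j < n, ∃ x ∈ T, c + j * ω ≤ g x ∧ g x < c + (j + 1) * ω) :
    n ≤ #{x ∈ T | c ≤ g x ∧ g x < c + n * ω} := by
  classical
  induction n with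
  | zero => exact Nat.zero_le _
  | succ n ih =>
    obtain ⟨x, hxT, hx_lo, hx_hi⟩ := hwin n (Nat.lt_succ_self n)
    have hx_new : x ∉ {x ∈ T | c ≤ g x ∧ g x < c + n * ω} := by
      simp only [mem_filter, not_and, not_lt]
      exact fun _ _ => hx_lo
    have hsub : insert x {x ∈ T | c ≤ g x ∧ g x < c + n * ω} ⊆
        {x ∈ T | c ≤ g x ∧ g x < c + (n + 1) * ω} := by
      intro y hy
      simp only [mem_insert, mem_filter] at hy ⊢
      rcases hy with rfl | ⟨hyT, hy_lo, hy_hi⟩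
      · exact ⟨hxT, le_trans (Nat.le_add_right c _) hx_lo, hx_hi⟩
      · exact ⟨hyT, hy_lo, hy_hi.trans_le (by gcongr; omega)⟩
    calc n + 1 ≤ #{x ∈ T | c ≤ g x ∧ g x < c + n * ω} + 1 :=
          Nat.succ_le_succ (ih fun j hj => hwin j (Nat.lt_succ_of_lt hj))
      _ = #(insert x {x ∈ T | c ≤ g x ∧ g x < c + n * ω}) := (card_insert_of_notMem hx_new).symm
      _ ≤ _ := card_le_card hsub

section PrefixSum

variable {ι : Type*} [Fintype ι] [LinearOrder ι] (f : ι → ℕ)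

def prefixSum (x : ι) : ℕ := ∑ y ∈ univ.filter (· < x), f y

theorem prefixSum_mono : Monotone (prefixSum f) := fun x y hxy =>
  sum_le_sum_of_subset fun z hz => by
    simp only [mem_filter, mem_univ, true_and] at hz ⊢
    exact hz.trans_le hxy

variable [LocallyFiniteOrder ι] {lo hi : ι}

theorem prefixSum_add_sum_Icc (hlohi : lo ≤ hi) :
    prefixSum f lo + ∑ x ∈ Icc lo hi, f x = ∑ y ∈ univ.filter (· ≤ hi), f y := by
  rw [prefixSum, ← sum_union]
  · congr 1
    ext y
    simp only [mem_union, mem_filter, mem_univ, true_and, mem_Icc]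
    constructor
    · rintro (hy | ⟨-, hy⟩)
      exacts [(hy.trans_le hlohi).le, hy]
    · intro hy
      exact (lt_or_ge y lo).imp_right fun h => ⟨h, hy⟩
  · rw [disjoint_left]
    intro y hy hy'
    simp only [mem_filter, mem_univ, true_and, mem_Icc] at hy hy'
    exact hy'.1.not_gt hy

theorem prefixSum_add_sum_Icc_le_prefixSum (hlohi : lo ≤ hi) {x : ι} (hx : hi < x) :
    prefixSum f lo + ∑ y ∈ Icc lo hi, f y ≤ prefixSum f x := by
  rw [prefixSum_add_sum_Icc f hlohi, prefixSum]
  exact sum_le_sum_of_subset fun z hz => by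
    simp only [mem_filter, mem_univ, true_and] at hz ⊢
    exact hz.trans_lt hx

theorem prefixSum_add_sum_Icc_le_sum (hlohi : lo ≤ hi) :
    prefixSum f lo + ∑ y ∈ Icc lo hi, f y ≤ ∑ y, f y := by
  rw [prefixSum_add_sum_Icc f hlohi]
  exact sum_le_sum_of_subset (subset_univ _)

theorem mem_Icc_of_prefixSum_mem_Ioo (hlohi : lo ≤ hi) {x : ι}
    (hx : prefixSum f x ∈ Set.Ioo (prefixSum f lo) (prefixSum f lo + ∑ y ∈ Icc lo hi, f y)) :
    x ∈ Icc lo hi :=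
  mem_Icc.2 ⟨((prefixSum_mono f).reflect_lt hx.1).le, not_lt.1 fun hhi =>
    (prefixSum_add_sum_Icc_le_prefixSum f hlohi hhi).not_gt hx.2⟩

end PrefixSum

theorem sample_density_character_general {α : Type*} (q : ℕ) (s : Fin q → List α)
    (lhat ω' : ℕ)
    (N : ℕ) (hN : N = ∑ x : Fin q, (s x).length)
    (b : Fin q → ℕ)
    (hb : ∀ x : Fin q, b x = ∑ y ∈ Finset.univ.filter (fun y : Fin q => y < x), (s y).length)
    (T : Finset (Fin q))
    (hdense : ∀ a : ℕ, a + (ω' + lhat) ≤ N → ∃ x ∈ T, a ≤ b x ∧ b x < a + (ω' + lhat))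
    (lo hi : Fin q) (hlohi : lo ≤ hi) (K : ℕ)
    (hK : (T ∩ Finset.Icc lo hi).card = K) :
    ∑ x ∈ Finset.Icc lo hi, (s x).length ≤ (K + 1) * (ω' + lhat) := by
  have hb_eq : b = prefixSum fun x => (s x).length := funext hb
  set ω := ω' + lhat
  by_contra! hlong
  -- Not `b lo`: empty strings before `lo` also start at `b lo`.
  set c := b lo + 1
  have hwindows_end : c + (K + 1) * ω ≤ N := by
    have := prefixSum_add_sum_Icc_le_sum (fun x => (s x).length) hlohi
    rw [← hb_eq] at this
    omega
  have hwin : ∀ j < K + 1, ∃ x ∈ T, c + j * ω ≤ b x ∧ b x < c + (j + 1) * ω := fun j hj => by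
    rw [add_mul, one_mul, ← add_assoc]
    exact hdense _ (le_trans (by rw [add_assoc, ← add_one_mul]; gcongr; omega) hwindows_end)
  have hsamples_in_range : {x ∈ T | c ≤ b x ∧ b x < c + (K + 1) * ω} ⊆ T ∩ Icc lo hi :=
    fun x hx => by
      rw [mem_filter] at hx
      refine mem_inter.2 ⟨hx.1, mem_Icc_of_prefixSum_mem_Ioo (fun x => (s x).length) hlohi ?_⟩
      rw [← hb_eq]
      exact ⟨hx.2.1, by omega⟩
  have hK_succ_le : K + 1 ≤ #(T ∩ Icc lo hi) :=
    (le_card_filter_of_forall_exists_mem_window T b c ω (K + 1) hwin).trans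
      (card_le_card hsamples_in_range)
  omega

/-- **Sample density lemma (character-based).**
Strings `s 0, …, s (q−1)`, each of length at most `lhat ≥ 1`; `b x` is the start
position of string `x` in the concatenated character array.  If the start
positions of the sampled strings `T` form an `(ω'+lhat)`-dense set in the
character array, then every contiguous range of strings containing exactly
`K` sampled strings has total character count at most `(K+1)·(ω'+lhat)`. -/
theorem sample_density_character {α : Type*} (q : ℕ) (s : Fin q → List α)
    (lhat ω' : ℕ) (hℓ : 1 ≤ lhat) (hω' : 0 < ω')
    (hlen : ∀ x : Fin q, (s x).length ≤ lhat)
    (N : ℕ) (hN : N = ∑ x : Fin q, (s x).length)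
    (b : Fin q → ℕ)
    (hb : ∀ x : Fin q, b x = ∑ y ∈ Finset.univ.filter (fun y : Fin q => y < x), (s y).length)
    (T : Finset (Fin q))
    (hdense : ∀ a : ℕ, a + (ω' + lhat) ≤ N → ∃ x ∈ T, a ≤ b x ∧ b x < a + (ω' + lhat))
    (lo hi : Fin q) (hlohi : lo ≤ hi) (K : ℕ)
    (hK : (T ∩ Finset.Icc lo hi).card = K) :
    ∑ x ∈ Finset.Icc lo hi, (s x).length ≤ (K + 1) * (ω' + lhat) :=
  sample_density_character_general q s lhat ω' N hN b hb T hdense lo hi hlohi K hK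
end

section
/- Let S₁,…,S_{p'} be lists of pairwise distinct strings over a linearly ordered alphabet, each list sorted in lexicographic order, each string of length at most ℓ̂ ≥ 1, with total character count m. Let v, r be positive integers such that p'(v+1) is a multiple of r and ω' := m/(p'(v+1)) is a positive integer. Suppose each list Sᵢ carries a set Tᵢ of sampled strings whose start positions are (ω'+ℓ̂)-dense in the character array of Sᵢ, with total number of samples ∑ᵢ|Tᵢ| = p'(v+1). Let V be the lexicographically sorted list of all sampled strings and define splitters f_j := V[j·p'(v+1)/r − 1] for j = 1,…,r−1. Define buckets B⁰ := {s : s ≤ f₁}, Bʲ := {s : f_j < s ≤ f_{j+1}} for 0 < j < r−1, and B^{r−1} := {s : f_{r−1} < s}, where s ranges over all strings. Then every bucket satisfies ‖Bʲ‖ ≤ (1 + r/v)·m/r + (1 + (v+1)/r)·p'·ℓ̂, where ‖Bʲ‖ is the total number of characters of the strings in Bʲ. -/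
lemma sum_map_filter_eq_sum_range {β : Type*} (d : β) (P : β → Bool) (g : β → ℕ) :
    ∀ (L : List β), ((L.filter P).map g).sum
      = ∑ x ∈ Finset.range L.length, if P (L.getD x d) then g (L.getD x d) else 0 := by
  intro L
  induction L with
  | nil => simp
  | cons a L ih =>
    rw [List.length_cons, Finset.sum_range_succ']
    simp only [List.getD_cons_succ, List.getD_cons_zero]
    rw [← ih]
    by_cases h : P a <;> simp [List.filter_cons, h, Nat.add_comm]

lemma sum_map_take_eq_sum_range {β : Type*} (d : β) (g : β → ℕ) (L : List β) (b : ℕ)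
    (hb : b ≤ L.length) :
    ((L.take b).map g).sum = ∑ x ∈ Finset.range b, g (L.getD x d) := by
  have h := sum_map_filter_eq_sum_range d (fun _ => true) g (L.take b)
  simp only [List.filter_true, if_true] at h
  rw [h, List.length_take, Nat.min_eq_left hb]
  refine Finset.sum_congr rfl (fun x hx => ?_)
  rw [Finset.mem_range] at hx
  congr 1
  simp [List.getD_eq_getElem?_getD, List.getElem?_take, hx]

lemma psum_mono {β : Type*} (g : β → ℕ) (L : List β) {x y : ℕ} (h : x ≤ y) :
    ((L.take x).map g).sum ≤ ((L.take y).map g).sum := by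
  rw [List.map_take, List.map_take]
  have : (L.map g).take x = ((L.map g).take y).take x := by
    rw [List.take_take, Nat.min_eq_left h]
  rw [this]
  exact (List.take_sublist _ _).sum_le_sum (fun a _ => Nat.zero_le a)

lemma per_list_bound {β : Type*} (d : β) (L : List β) (g : β → ℕ) (P : β → Bool)
    (T : Finset ℕ) (hT : T ⊆ Finset.range L.length) (w : ℕ)
    (hconv : ∀ x y z : ℕ, x ≤ y → y ≤ z → z < L.length →
      P (L.getD x d) → P (L.getD z d) → P (L.getD y d))
    (hdense : ∀ a : ℕ, a + w ≤ (L.map g).sum →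
      ∃ x ∈ T, a ≤ ((L.take x).map g).sum ∧ ((L.take x).map g).sum < a + w) :
    ((L.filter P).map g).sum
      ≤ ((T.filter (fun x => P (L.getD x d))).card + 1) * w := by
  classical
  set psum : ℕ → ℕ := fun x => ((L.take x).map g).sum with hpsum
  have htot : (L.map g).sum = psum L.length := by
    simp only [hpsum, List.map_take]
    rw [List.take_of_length_le (by simp)]
  have hdenseP : ∀ a : ℕ, a + w ≤ psum L.length →
      ∃ x ∈ T, a ≤ psum x ∧ psum x < a + w := by
    rw [← htot]; exact hdense
  have hmono : ∀ {x y : ℕ}, x ≤ y → psum x ≤ psum y := fun h => psum_mono g L h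
  set A : Finset ℕ := (Finset.range L.length).filter (fun x => P (L.getD x d)) with hA
  have hsumA : ((L.filter P).map g).sum = ∑ x ∈ A, g (L.getD x d) := by
    rw [sum_map_filter_eq_sum_range d P g L, hA, Finset.sum_filter]
  rcases A.eq_empty_or_nonempty with hAe | hAne
  · rw [hsumA, hAe]; simp
  · set a := A.min' hAne with ha
    set b := A.max' hAne + 1 with hb
    have hmem : ∀ x, x ∈ A ↔ (x < L.length ∧ P (L.getD x d)) := by
      intro x; simp [hA, Finset.mem_filter, Finset.mem_range]
    have hbLen : b ≤ L.length := by
      have := (hmem _).1 (A.max'_mem hAne); omega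
    have hAIco : A = Finset.Ico a b := by
      ext z
      simp only [Finset.mem_Ico, hb, Nat.lt_succ_iff]
      constructor
      · intro hz; exact ⟨A.min'_le z hz, A.le_max' z hz⟩
      · rintro ⟨h1, h2⟩
        have hma := (hmem _).1 (A.min'_mem hAne)
        have hMa := (hmem _).1 (A.max'_mem hAne)
        exact (hmem z).2 ⟨by omega, hconv a z (A.max' hAne) h1 h2 (by omega) hma.2 hMa.2⟩
    have hab : a ≤ b := by
      have := A.min'_le _ (A.max'_mem hAne); omega
    have hIcoSum : psum a + ∑ x ∈ Finset.Ico a b, g (L.getD x d) = psum b := by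
      have h1 : psum a = ∑ x ∈ Finset.Ico 0 a, g (L.getD x d) := by
        show ((L.take a).map g).sum = _
        rw [sum_map_take_eq_sum_range d g L a (le_trans (by omega) hbLen),
          Finset.range_eq_Ico]
      have h2 : psum b = ∑ x ∈ Finset.Ico 0 b, g (L.getD x d) := by
        show ((L.take b).map g).sum = _
        rw [sum_map_take_eq_sum_range d g L b hbLen, Finset.range_eq_Ico]
      rw [h1, h2, Finset.sum_Ico_consecutive _ (Nat.zero_le a) hab]
    set k := (T.filter (fun x => P (L.getD x d))).card with hk
    have hTA : T.filter (fun x => P (L.getD x d)) = T ∩ A := by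
      ext x
      simp only [Finset.mem_filter, Finset.mem_inter, hmem]
      constructor
      · rintro ⟨hxT, hP⟩; exact ⟨hxT, Finset.mem_range.1 (hT hxT), hP⟩
      · tauto
    have hmain : psum b ≤ psum a + (k + 1) * w := by
      by_contra hcon
      push_neg at hcon
      have hble : psum b ≤ psum L.length := hmono hbLen
      have hdense' : ∀ t : Fin (k + 1), ∃ x ∈ T,
          psum a + 1 + (t : ℕ) * w ≤ psum x ∧ psum x < psum a + 1 + (t : ℕ) * w + w := by
        intro t
        refine hdenseP _ ?_
        have h1 : psum a + 1 + (t : ℕ) * w + w ≤ psum a + (k + 1) * w + 1 := by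
          have h2 : ((t : ℕ) + 1) * w ≤ (k + 1) * w :=
            Nat.mul_le_mul_right w (by omega)
          nlinarith
        omega
      choose x hxT hx1 hx2 using hdense'
      have hxlt : ∀ t, x t ∈ T ∩ Finset.Ico a b := by
        intro t
        refine Finset.mem_inter.2 ⟨hxT t, Finset.mem_Ico.2 ⟨?_, ?_⟩⟩
        · by_contra h
          push_neg at h
          have h1 : psum (x t) ≤ psum a := hmono (le_of_lt h)
          have h2 := hx1 t
          omega
        · by_contra h
          push_neg at h
          have h1 : psum b ≤ psum (x t) := hmono h
          have h2 := hx2 t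
          have h3 : psum a + 1 + (t : ℕ) * w + w ≤ psum a + (k + 1) * w + 1 := by
            have h4 : ((t : ℕ) + 1) * w ≤ (k + 1) * w :=
              Nat.mul_le_mul_right w (by omega)
            nlinarith
          omega
      have hstrict : ∀ s t : Fin (k + 1), s < t → psum (x s) < psum (x t) := by
        intro s t hst
        have h1 := hx2 s
        have h2 := hx1 t
        have h3 : ((s : ℕ) + 1) * w ≤ (t : ℕ) * w :=
          Nat.mul_le_mul_right w hst
        nlinarith
      have hinj : Set.InjOn x (Finset.univ : Finset (Fin (k + 1))) := by
        intro s _ t _ hst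
        rcases lt_trichotomy s t with h | h | h
        · exact absurd (congrArg psum hst) (Nat.ne_of_lt (hstrict s t h))
        · exact h
        · exact absurd (congrArg psum hst) (Nat.ne_of_gt (hstrict t s h))
      have hcard := Finset.card_le_card_of_injOn x (fun t _ => hxlt t) hinj
      rw [Finset.card_univ, Fintype.card_fin] at hcard
      rw [hk, hTA, hAIco] at hcard
      omega
    rw [hsumA, hAIco]
    omega

/-- **Single-level character-based partitioning bound.**
`p'` lexicographically sorted lists of pairwise distinct strings, each string
of length at most `lhat ≥ 1`, total character count `m`;
`ω' := m/(p'(v+1))` a positive integer, `r ∣ p'(v+1)`; each list carries a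
set `T i` of sampled string indices whose start positions are
`(ω'+lhat)`-dense in the character array of `S i`, with `∑ᵢ |T i| = p'(v+1)`;
`V` is the lexicographically sorted list of all sampled strings, splitters
`f j = V[j·p'(v+1)/r − 1]`, buckets defined by the splitters.  Then every
bucket contains at most `(1 + r/v)·m/r + (1 + (v+1)/r)·p'·lhat` characters. -/
theorem character_based_partitioning {α : Type*} [LinearOrder α]
    (p' v r m lhat : ℕ) (hp' : 0 < p') (hv : 0 < v) (hr : 0 < r) (hlhat : 1 ≤ lhat)
    (S : Fin p' → List (List α))
    (hsorted : ∀ i, (S i).Pairwise (· < ·))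
    (hdistinct : ((List.ofFn S).flatten).Nodup)
    (hlen : ∀ i, ∀ s ∈ S i, s.length ≤ lhat)
    (hm : m = ∑ i, (((S i).map List.length).sum))
    (hdvd : r ∣ p' * (v + 1))
    (ω' : ℕ) (hω' : 0 < ω') (hω'def : m = p' * (v + 1) * ω')
    (T : Fin p' → Finset ℕ)
    (hTsub : ∀ i, T i ⊆ Finset.range (S i).length)
    (hdense : ∀ i, ∀ a : ℕ, a + (ω' + lhat) ≤ ((S i).map List.length).sum →
      ∃ x ∈ T i, a ≤ (((S i).take x).map List.length).sum ∧
        (((S i).take x).map List.length).sum < a + (ω' + lhat))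
    (hcard : ∑ i, (T i).card = p' * (v + 1))
    (V : List (List α))
    (hVsorted : V.Pairwise (· < ·))
    (hVlen : V.length = p' * (v + 1))
    (hVmem : ∀ x : List α, x ∈ V ↔ ∃ i : Fin p', ∃ j ∈ T i,
      ∃ hj : j < (S i).length, (S i).get ⟨j, hj⟩ = x)
    (f : ℕ → List α)
    (hf : ∀ j : ℕ, 1 ≤ j → j ≤ r - 1 →
      ∀ hidx : j * (p' * (v + 1)) / r - 1 < V.length,
        f j = V.get ⟨j * (p' * (v + 1)) / r - 1, hidx⟩)
    (j : ℕ) (hj : j < r) :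
    ((((List.ofFn S).flatten.filter
        (fun s => decide ((j = 0 ∨ f j < s) ∧ (j = r - 1 ∨ s ≤ f (j + 1))))).map
          List.length).sum : ℝ)
      ≤ (1 + (r : ℝ) / (v : ℝ)) * (m : ℝ) / (r : ℝ)
        + (1 + ((v : ℝ) + 1) / (r : ℝ)) * (p' : ℝ) * (lhat : ℝ) := by
  classical
  obtain ⟨q, hq⟩ := hdvd
  set N := p' * (v + 1) with hN
  set w := ω' + lhat with hw
  set P : List α → Bool :=
    (fun s => decide ((j = 0 ∨ f j < s) ∧ (j = r - 1 ∨ s ≤ f (j + 1)))) with hPdef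
  have hP : ∀ s : List α, P s = true ↔
      ((j = 0 ∨ f j < s) ∧ (j = r - 1 ∨ s ≤ f (j + 1))) := by
    intro s; rw [hPdef]; exact decide_eq_true_iff
  -- split the flatten sum into per-list sums
  have hsplit : (((List.ofFn S).flatten.filter P).map List.length).sum
      = ∑ i, (((S i).filter P).map List.length).sum := by
    rw [List.filter_flatten, List.map_flatten, List.sum_flatten, List.map_map,
      List.map_map, List.map_ofFn, List.sum_ofFn]
    rfl
  -- per-list sample counts
  set k : Fin p' → ℕ := fun i => ((T i).filter (fun x => P ((S i).getD x []))).card with hk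
  -- monotone get
  have hget_mono : ∀ (i : Fin p') (x y : ℕ) (hx : x < (S i).length)
      (hy : y < (S i).length), x ≤ y → (S i).get ⟨x, hx⟩ ≤ (S i).get ⟨y, hy⟩ := by
    intro i x y hx hy hxy
    rcases Nat.eq_or_lt_of_le hxy with h | h
    · subst h; exact le_refl _
    · exact le_of_lt ((hsorted i).rel_get_of_lt h)
  -- per-list bound
  have hPL : ∀ i, (((S i).filter P).map List.length).sum ≤ (k i + 1) * w := by
    intro i
    refine per_list_bound [] (S i) List.length P (T i) (hTsub i) w ?_ (hdense i)
    intro x y z hxy hyz hz hPx hPz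
    have hx : x < (S i).length := by omega
    have hy : y < (S i).length := by omega
    rw [List.getD_eq_getElem _ _ hx] at hPx
    rw [List.getD_eq_getElem _ _ hz] at hPz
    rw [List.getD_eq_getElem _ _ hy, hP]
    rw [hP] at hPx hPz
    constructor
    · rcases hPx.1 with h | h
      · exact Or.inl h
      · exact Or.inr (lt_of_lt_of_le h (hget_mono i x y hx hy hxy))
    · rcases hPz.2 with h | h
      · exact Or.inl h
      · exact Or.inr (le_trans (hget_mono i y z hy hz hyz) h)
  -- total samples in bucket ≤ samples of V in bucket
  have hsum_k : ∑ i, k i ≤ (V.filter P).length := by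
    have hVnodup : (V.filter P).Nodup := hVsorted.nodup.filter P
    have h1 : ∑ i, k i
        = (Finset.univ.sigma (fun i => (T i).filter (fun x => P ((S i).getD x [])))).card :=
      (Finset.card_sigma _ _).symm
    rw [h1, ← List.toFinset_card_of_nodup hVnodup]
    obtain ⟨hnd, hpw⟩ := List.nodup_flatten.1 hdistinct
    have hdisj : ∀ i i' : Fin p', i < i' → List.Disjoint (S i) (S i') := by
      intro i i' hii'
      exact List.pairwise_ofFn.1 hpw hii'
    refine Finset.card_le_card_of_injOn (fun z => (S z.1).getD z.2 []) ?_ ?_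
    · rintro ⟨i, x⟩ hz
      simp only [Finset.mem_coe, Finset.mem_sigma, Finset.mem_filter] at hz
      obtain ⟨-, hxT, hPx⟩ := hz
      have hx : x < (S i).length := Finset.mem_range.1 (hTsub i hxT)
      rw [Finset.mem_coe, List.mem_toFinset, List.mem_filter]
      refine ⟨(hVmem _).2 ⟨i, x, hxT, hx, ?_⟩, hPx⟩
      show (S i).get ⟨x, hx⟩ = (S i).getD x []
      rw [List.getD_eq_getElem _ _ hx, List.get_eq_getElem]
    · rintro ⟨i, x⟩ hz ⟨i', x'⟩ hz' heq
      simp only [Finset.coe_sigma, Finset.coe_filter, Set.mem_sigma_iff,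
        Finset.mem_coe, Set.mem_setOf_eq, Finset.mem_univ, true_and] at hz hz'
      have hx : x < (S i).length := Finset.mem_range.1 (hTsub i hz.1)
      have hx' : x' < (S i').length := Finset.mem_range.1 (hTsub i' hz'.1)
      simp only at heq
      rcases eq_or_ne i i' with hii | hii
      · subst hii
        have : x = x' := by
          have hinj := List.nodup_iff_injective_get.1 (hsorted i).nodup
          have : (S i).get ⟨x, hx⟩ = (S i).get ⟨x', hx'⟩ := by
            rw [List.get_eq_getElem, List.get_eq_getElem,
              ← List.getD_eq_getElem _ ([] : List α) hx,
              ← List.getD_eq_getElem _ ([] : List α) hx', heq]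
          exact congrArg Fin.val (hinj this)
        subst this
        rfl
      · exfalso
        have hmem1 : (S i).getD x [] ∈ S i := by
          rw [List.getD_eq_getElem _ _ hx]; exact List.getElem_mem hx
        have hmem2 : (S i).getD x [] ∈ S i' := by
          rw [heq, List.getD_eq_getElem _ _ hx']; exact List.getElem_mem hx'
        rcases lt_or_gt_of_ne hii with h | h
        · exact hdisj i i' h hmem1 hmem2
        · exact hdisj i' i h hmem2 hmem1
  -- V samples in bucket ≤ q
  have hm_pos : 0 < m := by
    rw [hω'def]; positivity
  have hN_pos : 0 < N := by positivity
  have hq_pos : 0 < q := by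
    rcases Nat.eq_zero_or_pos q with h | h
    · rw [h, Nat.mul_zero] at hq; omega
    · exact h
  have hjq_div : ∀ j' : ℕ, j' * (p' * (v + 1)) / r = j' * q := by
    intro j'
    rw [← hN, hq]
    rw [show j' * (r * q) = r * (j' * q) by ring, Nat.mul_div_cancel_left _ hr]
  have hVcount : (V.filter P).length ≤ q := by
    have hidx_bound : ∀ (y : ℕ) (hy : y < V.length), P (V.get ⟨y, hy⟩) = true →
        j * q ≤ y ∧ y < (j + 1) * q := by
      intro y hy hPy
      rw [hP] at hPy
      obtain ⟨h1, h2⟩ := hPy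
      have hNrq : N = r * q := hq
      have hVN : V.length = N := hVlen
      constructor
      · rcases Nat.eq_zero_or_pos j with hj0 | hj1
        · simp [hj0]
        · rcases h1 with h0 | hlt
          · omega
          · have hjr1 : j ≤ r - 1 := by omega
            have hjqN : j * q ≤ (r - 1) * q := Nat.mul_le_mul_right q hjr1
            have hr1q : (r - 1) * q + q = r * q := by
              have : r - 1 + 1 = r := by omega
              calc (r - 1) * q + q = (r - 1 + 1) * q := by ring
                _ = r * q := by rw [this]
            have hidx : j * (p' * (v + 1)) / r - 1 < V.length := by
              rw [hjq_div j]; omega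
            rw [hf j hj1 hjr1 hidx] at hlt
            by_contra hcon
            push_neg at hcon
            have hylt : y ≤ j * (p' * (v + 1)) / r - 1 := by
              rw [hjq_div j]; omega
            have : V.get ⟨y, hy⟩ ≤ V.get ⟨j * (p' * (v + 1)) / r - 1, hidx⟩ := by
              rcases Nat.eq_or_lt_of_le hylt with he | hl
              · have : (⟨y, hy⟩ : Fin V.length) = ⟨j * (p' * (v + 1)) / r - 1, hidx⟩ :=
                  Fin.ext he
                rw [this]
              · exact le_of_lt (hVsorted.rel_get_of_lt hl)
            exact absurd hlt (not_lt.2 this)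
      · rcases Nat.lt_or_ge (j + 1) r with hjr | hjr
        swap
        · -- j + 1 = r
          have hjr' : j + 1 = r := by omega
          have : (j + 1) * q = r * q := by rw [hjr']
          omega
        · -- j + 1 ≤ r - 1
          have hj1le : j + 1 ≤ r - 1 := by omega
          have hle : V.get ⟨y, hy⟩ ≤ f (j + 1) := by
            rcases h2 with h0 | hle
            · omega
            · exact hle
          have hj1q : (j + 1) * q ≤ (r - 1) * q := Nat.mul_le_mul_right q hj1le
          have hr1q : (r - 1) * q + q = r * q := by
            have h5 : r - 1 + 1 = r := by omega
            calc (r - 1) * q + q = (r - 1 + 1) * q := by ring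
              _ = r * q := by rw [h5]
          have hidx : (j + 1) * (p' * (v + 1)) / r - 1 < V.length := by
            rw [hjq_div (j + 1)]; omega
          rw [hf (j + 1) (by omega) hj1le hidx] at hle
          by_contra hcon
          push_neg at hcon
          have hgt : (j + 1) * (p' * (v + 1)) / r - 1 < y := by
            rw [hjq_div (j + 1)]
            have : 1 ≤ (j + 1) * q := by nlinarith
            omega
          have : V.get ⟨(j + 1) * (p' * (v + 1)) / r - 1, hidx⟩ < V.get ⟨y, hy⟩ :=
            hVsorted.rel_get_of_lt hgt
          exact absurd hle (not_le.2 this)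
    -- translate filter length into an index count
    have hflen : (V.filter P).length
        = ((Finset.range V.length).filter (fun y => P (V.getD y []))).card := by
      have h1 := sum_map_filter_eq_sum_range ([] : List α) P (fun _ => 1) V
      have h2 : ((V.filter P).map (fun _ => 1)).sum = (V.filter P).length := by
        rw [List.map_const', List.sum_replicate, smul_eq_mul, mul_one]
      rw [← h2, h1, Finset.card_filter]
    rw [hflen]
    have hsub : (Finset.range V.length).filter (fun y => P (V.getD y []))
        ⊆ Finset.Ico (j * q) ((j + 1) * q) := by
      intro y hy
      simp only [Finset.mem_filter, Finset.mem_range] at hy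
      obtain ⟨hylt, hPy⟩ := hy
      rw [List.getD_eq_getElem _ _ hylt] at hPy
      have := hidx_bound y hylt (by rw [List.get_eq_getElem]; exact hPy)
      exact Finset.mem_Ico.2 this
    calc ((Finset.range V.length).filter (fun y => P (V.getD y []))).card
        ≤ (Finset.Ico (j * q) ((j + 1) * q)).card := Finset.card_le_card hsub
      _ = (j + 1) * q - j * q := Nat.card_Ico _ _
      _ = q := by rw [Nat.add_mul, Nat.one_mul]; omega
  -- natural number bound
  have hnat : (((List.ofFn S).flatten.filter P).map List.length).sum ≤ (q + p') * w := by
    rw [hsplit]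
    calc ∑ i, (((S i).filter P).map List.length).sum
        ≤ ∑ i, (k i + 1) * w := Finset.sum_le_sum (fun i _ => hPL i)
      _ = (∑ i, k i + p') * w := by
          rw [← Finset.sum_mul, Finset.sum_add_distrib]
          simp [Finset.card_univ]
      _ ≤ (q + p') * w := by
          have := hsum_k.trans hVcount
          exact Nat.mul_le_mul_right w (by omega)
  -- pass to the reals
  have hv0 : (0:ℝ) < (v:ℝ) := by exact_mod_cast hv
  have hr0 : (0:ℝ) < (r:ℝ) := by exact_mod_cast hr
  have hqr : (r:ℝ) * (q:ℝ) = (p':ℝ) * ((v:ℝ) + 1) := by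
    have : (p' * (v + 1) : ℕ) = r * q := hq
    exact_mod_cast this.symm
  have hq_real : (q:ℝ) = (p':ℝ) * ((v:ℝ) + 1) / (r:ℝ) := by
    rw [eq_div_iff hr0.ne']; linarith [hqr]
  have hm0 : (m:ℝ) = (p':ℝ) * ((v:ℝ) + 1) * (ω':ℝ) := by exact_mod_cast hω'def
  rw [hw] at hnat
  have hcast : ((((List.ofFn S).flatten.filter P).map List.length).sum : ℝ)
      ≤ (((q + p') * (ω' + lhat) : ℕ) : ℝ) := by exact_mod_cast hnat
  refine le_trans hcast ?_
  push_cast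
  rw [hq_real, hm0, ← sub_nonneg]
  have hexp : (1 + (r:ℝ) / v) * ((p':ℝ) * ((v:ℝ) + 1) * (ω':ℝ)) / r
      + (1 + ((v:ℝ) + 1) / r) * (p':ℝ) * (lhat:ℝ)
      - ((p':ℝ) * ((v:ℝ) + 1) / (r:ℝ) + (p':ℝ)) * ((ω':ℝ) + (lhat:ℝ))
      = (p':ℝ) * (ω':ℝ) / (v:ℝ) := by
    field_simp
    ring
  rw [hexp]
  positivity
end

section
/- Let N ≥ 0, ℓ̂ ≥ 0, p ≥ 0, r ≥ 1 and v > 0 be real numbers, and let (C_t)_{t≥0} be a sequence of nonnegative real numbers with C₀ ≤ N and C_t ≤ (1 + r/v)·C_{t−1}/r + (1 + (v+1)/r)·(p/r^{t−1})·ℓ̂ for every t ≥ 1. Then for every t ≥ 0 it holds that C_t ≤ (1 + r/v)^t · ( N/r^t + t·(1 + (v+1)/r)·(p/r^{t−1})·ℓ̂ ). -/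
/-!
With `a = 1 + r/v` and `B = (1 + (v+1)/r)·p·ℓ̂`, the normalized sizes `D t = r^t · C t / a^t`
satisfy `D (t+1) ≤ D t + r·B / a^(t+1) ≤ D t + r·B` because `a ≥ 1`, so `D t ≤ N + t·r·B`.
Written as `t·r·B / r^t`, the last term avoids the truncated exponent `t - 1` of the bound.
-/

theorem le_pow_mul_of_le_mul_div_add_div_pow {a r B N : ℝ} {C : ℕ → ℝ}
    (ha : 1 ≤ a) (hr : 0 < r) (hB : 0 ≤ B) (h0 : C 0 ≤ N)
    (hrec : ∀ t, C (t + 1) ≤ a * C t / r + B / r ^ t) (t : ℕ) :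
    C t ≤ a ^ t * ((N + t * r * B) / r ^ t) := by
  induction t with
  | zero => simpa using h0
  | succ t ih =>
    have hBt : B / r ^ t ≤ a ^ (t + 1) * (B / r ^ t) :=
      le_mul_of_one_le_left (by positivity) (one_le_pow₀ ha)
    calc C (t + 1) ≤ a * C t / r + B / r ^ t := hrec t
      _ ≤ a * (a ^ t * ((N + t * r * B) / r ^ t)) / r + a ^ (t + 1) * (B / r ^ t) := by
        gcongr
      _ = a ^ (t + 1) * ((N + ↑(t + 1) * r * B) / r ^ (t + 1)) := by
        push_cast
        field_simp
        ring

theorem natCast_mul_div_pow_pred {r : ℝ} (hr : r ≠ 0) (t : ℕ) (x : ℝ) :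
    (t : ℝ) * (x / r ^ (t - 1)) = t * r * x / r ^ t := by
  cases t with
  | zero => simp
  | succ t =>
    rw [Nat.add_sub_cancel, pow_succ]
    field_simp

theorem character_bucket_recurrence_general (N lhat p r v : ℝ)
    (hlhat : 0 ≤ lhat) (hp : 0 ≤ p) (hr : 1 ≤ r) (hv : 0 < v)
    (C : ℕ → ℝ)
    (hC0 : C 0 ≤ N)
    (hCrec : ∀ t : ℕ, 1 ≤ t →
      C t ≤ (1 + r / v) * C (t - 1) / r + (1 + (v + 1) / r) * (p / r ^ (t - 1)) * lhat) :
    ∀ t : ℕ, C t ≤ (1 + r / v) ^ t *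
      (N / r ^ t + (t : ℝ) * (1 + (v + 1) / r) * (p / r ^ (t - 1)) * lhat) := by
  intro t
  have hr0 : 0 < r := one_pos.trans_le hr
  set B := (1 + (v + 1) / r) * p * lhat
  have hB : 0 ≤ B := by positivity
  have ha : 1 ≤ 1 + r / v := le_add_of_nonneg_right (by positivity)
  have hrec (s : ℕ) : C (s + 1) ≤ (1 + r / v) * C s / r + B / r ^ s := by
    have h := hCrec (s + 1) (Nat.le_add_left 1 s)
    rw [Nat.add_sub_cancel] at h
    convert h using 2
    ring
  calc C t ≤ (1 + r / v) ^ t * ((N + t * r * B) / r ^ t) :=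
        le_pow_mul_of_le_mul_div_add_div_pow ha hr0 hB hC0 hrec t
    _ = _ := by
        rw [add_div, ← natCast_mul_div_pow_pred hr0.ne']
        ring

/-- **Multi-level character bucket-size recurrence.**
If `C 0 ≤ N` and
`C t ≤ (1 + r/v)·C (t−1)/r + (1 + (v+1)/r)·(p/r^(t−1))·lhat` for all `t ≥ 1`,
then `C t ≤ (1 + r/v)^t · (N/r^t + t·(1 + (v+1)/r)·(p/r^(t−1))·lhat)`
for every `t ≥ 0`. -/
theorem character_bucket_recurrence (N lhat p r v : ℝ)
    (hN : 0 ≤ N) (hlhat : 0 ≤ lhat) (hp : 0 ≤ p) (hr : 1 ≤ r) (hv : 0 < v)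
    (C : ℕ → ℝ) (hCnonneg : ∀ t, 0 ≤ C t)
    (hC0 : C 0 ≤ N)
    (hCrec : ∀ t : ℕ, 1 ≤ t →
      C t ≤ (1 + r / v) * C (t - 1) / r + (1 + (v + 1) / r) * (p / r ^ (t - 1)) * lhat) :
    ∀ t : ℕ, C t ≤ (1 + r / v) ^ t *
      (N / r ^ t + (t : ℝ) * (1 + (v + 1) / r) * (p / r ^ (t - 1)) * lhat) :=
  character_bucket_recurrence_general N lhat p r v hlhat hp hr hv C hC0 hCrec
end

section
/- Let k ≥ 1 and r ≥ 1 be integers, let N ≥ 0, ℓ̂ ≥ 0 and p > 0 be real numbers, and set v := k·r. Then for every integer t with 1 ≤ t ≤ k it holds that (1 + r/v)^t · ( N/r^t + t·(1 + (v+1)/r)·(p/r^{t−1})·ℓ̂ ) ≤ e·(p/r^t)·( N/p + k·(k+2)·r·ℓ̂ ), where e is Euler's number. In particular, dividing the level-t character bucket bound by the group size p/r^t, the number of characters per processor is at most e·(N/p + k(k+2)·r·ℓ̂) on every level. -/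
/-- **Character-based sampling keeps characters per processor balanced.**
For integers `k ≥ 1`, `r ≥ 1`, reals `N ≥ 0`, `lhat ≥ 0`, `p > 0`, and
sampling factor `v = k·r`, for every `1 ≤ t ≤ k` the level-`t` character
bucket bound satisfies
`(1 + r/v)^t·(N/r^t + t·(1+(v+1)/r)·(p/r^(t−1))·lhat)
  ≤ e·(p/r^t)·(N/p + k·(k+2)·r·lhat)`;
in particular, dividing by the group size `p/r^t`, the number of characters
per processor is at most `e·(N/p + k(k+2)·r·lhat)` on every level. -/
theorem character_based_sampling_balance (k r : ℕ) (hk : 1 ≤ k) (hr : 1 ≤ r)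
    (N lhat p v : ℝ) (hN : 0 ≤ N) (hlhat : 0 ≤ lhat) (hp : 0 < p)
    (hv : v = (k : ℝ) * (r : ℝ)) :
    ∀ t : ℕ, 1 ≤ t → t ≤ k →
      (1 + (r : ℝ) / v) ^ t *
        (N / (r : ℝ) ^ t + (t : ℝ) * (1 + (v + 1) / (r : ℝ)) * (p / (r : ℝ) ^ (t - 1)) * lhat)
      ≤ Real.exp 1 * (p / (r : ℝ) ^ t) *
          (N / p + (k : ℝ) * ((k : ℝ) + 2) * (r : ℝ) * lhat) := by
  intro t ht htk
  have hr' : (1:ℝ) ≤ (r:ℝ) := by exact_mod_cast hr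
  have hrpos : (0:ℝ) < (r:ℝ) := by linarith
  have hk' : (1:ℝ) ≤ (k:ℝ) := by exact_mod_cast hk
  have hkpos : (0:ℝ) < (k:ℝ) := by linarith
  have hvpos : 0 < v := by rw [hv]; positivity
  have hrt : (0:ℝ) < (r:ℝ) ^ t := by positivity
  have ht' : (1:ℝ) ≤ (t:ℝ) := by exact_mod_cast ht
  have htk' : (t:ℝ) ≤ (k:ℝ) := by exact_mod_cast htk
  -- the base equals 1 + 1/k
  have hbase : 1 + (r:ℝ)/v = 1 + 1/(k:ℝ) := by
    rw [hv]; field_simp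
  have h1 : (1 + (r:ℝ)/v) ^ t ≤ Real.exp 1 := by
    rw [hbase]
    calc (1 + 1/(k:ℝ)) ^ t ≤ (Real.exp (1/(k:ℝ))) ^ t := by
          apply pow_le_pow_left₀ (by positivity)
          linarith [Real.add_one_le_exp (1/(k:ℝ))]
      _ = Real.exp ((t:ℝ) * (1/(k:ℝ))) := by rw [← Real.exp_nat_mul]
      _ ≤ Real.exp 1 := by
          apply Real.exp_le_exp.mpr
          rw [mul_one_div, div_le_one hkpos]; exact htk'
  -- rewrite r^(t-1)
  have hts : t - 1 + 1 = t := Nat.succ_pred_eq_of_pos ht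
  have hpow : (r:ℝ) ^ t = (r:ℝ) ^ (t-1) * (r:ℝ) := by
    rw [← hts, pow_succ, hts]
  have hrt1 : (0:ℝ) < (r:ℝ) ^ (t-1) := by positivity
  set B := N / (r:ℝ) ^ t + (t:ℝ) * (1 + (v + 1) / (r:ℝ)) * (p / (r:ℝ) ^ (t-1)) * lhat with hB
  set C := (p / (r:ℝ) ^ t) * (N / p + (k:ℝ) * ((k:ℝ) + 2) * (r:ℝ) * lhat) with hC
  have hBnn : 0 ≤ B := by
    apply add_nonneg
    · positivity
    · apply mul_nonneg _ hlhat
      apply mul_nonneg (mul_nonneg (by linarith) _) (by positivity)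
      have : 0 ≤ (v + 1) / (r:ℝ) := by positivity
      linarith
  have hBC : B ≤ C := by
    have hkey : (t:ℝ) * ((r:ℝ) + v + 1) ≤ (k:ℝ) * ((k:ℝ) + 2) * (r:ℝ) := by
      rw [hv]; nlinarith
    have hNt : N / (r:ℝ) ^ t = (p / (r:ℝ) ^ t) * (N / p) := by
      field_simp
    have hsecond : (t:ℝ) * (1 + (v + 1) / (r:ℝ)) * (p / (r:ℝ) ^ (t-1)) * lhat
        ≤ (p / (r:ℝ) ^ t) * ((k:ℝ) * ((k:ℝ) + 2) * (r:ℝ) * lhat) := by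
      have heq : (t:ℝ) * (1 + (v + 1) / (r:ℝ)) * (p / (r:ℝ) ^ (t-1)) * lhat
          = (p / (r:ℝ) ^ t) * ((t:ℝ) * ((r:ℝ) + v + 1) * lhat) := by
        rw [hpow]; field_simp; ring
      rw [heq]
      apply mul_le_mul_of_nonneg_left _ (by positivity)
      exact mul_le_mul_of_nonneg_right hkey hlhat
    calc B = (p / (r:ℝ) ^ t) * (N / p)
          + (t:ℝ) * (1 + (v + 1) / (r:ℝ)) * (p / (r:ℝ) ^ (t-1)) * lhat := by
            rw [hB, hNt]
      _ ≤ (p / (r:ℝ) ^ t) * (N / p)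
          + (p / (r:ℝ) ^ t) * ((k:ℝ) * ((k:ℝ) + 2) * (r:ℝ) * lhat) :=
            add_le_add le_rfl hsecond
      _ = C := by rw [hC]; ring
  calc (1 + (r:ℝ)/v) ^ t * B ≤ Real.exp 1 * B :=
        mul_le_mul_of_nonneg_right h1 hBnn
    _ ≤ Real.exp 1 * C := by
        apply mul_le_mul_of_nonneg_left hBC (le_of_lt (Real.exp_pos 1))
    _ = Real.exp 1 * (p / (r:ℝ) ^ t) *
          (N / p + (k:ℝ) * ((k:ℝ) + 2) * (r:ℝ) * lhat) := by rw [hC]; ring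
end

section
/- Let S₁,…,S_{p'} be sorted arrays over a linearly ordered set whose m elements are pairwise distinct, let k, v, r be positive integers with p'(v+1) a multiple of r, set ω := m/(p'(v+1)) (a rational number, not assumed to be an integer), and assume m ≥ k·p'(v+1), i.e. ω ≥ k. Suppose each array Sᵢ carries a ⌈ω⌉-dense set Pᵢ of sampled positions, with total number of samples ∑ᵢ|Pᵢ| = p'(v+1). Let V be the sorted list of all sampled values, define splitters f_j := V[j·p'(v+1)/r − 1] for j = 1,…,r−1, and define buckets B⁰ := {s : s ≤ f₁}, Bʲ := {s : f_j < s ≤ f_{j+1}} for 0 < j < r−1, and B^{r−1} := {s : f_{r−1} < s}. Then every bucket satisfies |Bʲ| ≤ (1 + r/v)·(1 + 1/k)·m/r. -/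
lemma aux_length_filter {α : Type*} (l : List α) (p : α → Bool) :
    (l.filter p).length =
      (Finset.univ.filter (fun i : Fin l.length => p (l.get i))).card := by
  conv_lhs => rw [← List.ofFn_get l]
  rw [List.ofFn_eq_map, List.filter_map, List.length_map]
  rw [Finset.card_def, Finset.filter_val, Fin.univ_def]
  simp only [Multiset.filter_coe, Multiset.coe_card]
  congr 1
  apply List.filter_congr
  intro x _; simp

lemma card_filter_fin (N : ℕ) (P : ℕ → Prop) [DecidablePred P] :
    (Finset.univ.filter (fun i : Fin N => P i.1)).card = ((Finset.range N).filter P).card := by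
  refine Finset.card_nbij (fun i => (i : ℕ)) ?_ ?_ ?_
  · intro a ha; simp at ha ⊢; exact ha
  · intro a _ b _ h; exact Fin.val_injective h
  · intro b hb; simp at hb ⊢; exact ⟨⟨b, hb.1⟩, hb.2, rfl⟩

open Classical in
lemma aux_window {α : Type*} [LinearOrder α] (l : List α) (hl : l.Pairwise (· < ·))
    (p : α → Bool)
    (hconv : ∀ x y z : α, x ≤ y → y ≤ z → p x = true → p z = true → p y = true)
    (c : ℕ) (hc : 0 < c) (Q : Finset ℕ)
    (hdense : ∀ a : ℕ, a + c ≤ l.length → ∃ x ∈ Q, a ≤ x ∧ x < a + c) :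
    (l.filter p).length ≤
      c * ((Q.filter (fun q => ∃ h : q < l.length, p (l.get ⟨q, h⟩) = true)).card + 1) := by
  classical
  rw [aux_length_filter]
  set n := l.length with hn
  set A : Finset (Fin n) := Finset.univ.filter (fun i : Fin n => p (l.get i) = true) with hA
  rcases A.eq_empty_or_nonempty with hAe | hAne
  · rw [hAe]; simp
  have sm : StrictMono l.get := fun a b hab => hl.rel_get_of_lt hab
  set a := A.min' hAne with ha
  set b := A.max' hAne with hb
  have key : ∀ i : Fin n, a ≤ i → i ≤ b → i ∈ A := by
    intro i h1 h2
    have hpa : p (l.get a) = true := (Finset.mem_filter.mp (A.min'_mem hAne)).2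
    have hpb : p (l.get b) = true := (Finset.mem_filter.mp (A.max'_mem hAne)).2
    exact Finset.mem_filter.mpr ⟨Finset.mem_univ _,
      hconv (l.get a) (l.get i) (l.get b) (sm.monotone h1) (sm.monotone h2) hpa hpb⟩
  have hAIcc : A = Finset.Icc a b := by
    ext i
    simp only [Finset.mem_Icc]
    constructor
    · intro hi; exact ⟨A.min'_le i hi, A.le_max' i hi⟩
    · intro hi; exact key i hi.1 hi.2
  have hAcard : A.card = (b : ℕ) + 1 - (a : ℕ) := by rw [hAIcc, Fin.card_Icc]
  set t := (Q.filter (fun q => ∃ h : q < n, p (l.get ⟨q, h⟩) = true)).card with ht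
  by_contra hlt
  push_neg at hlt
  have hab : (a : ℕ) + c * (t + 1) ≤ (b : ℕ) := by omega
  have hex : ∀ s : Fin (t + 1), ∃ x, x ∈ Q ∧ (a : ℕ) + (s : ℕ) * c ≤ x ∧ x < (a : ℕ) + (s : ℕ) * c + c := by
    intro s
    have hwin : (a : ℕ) + (s : ℕ) * c + c ≤ n := by
      have h1 : ((s : ℕ) + 1) * c ≤ (t + 1) * c :=
        Nat.mul_le_mul_right c (by omega)
      have h2 : (b : ℕ) < n := b.isLt
      have : (a : ℕ) + ((s : ℕ) + 1) * c ≤ (a : ℕ) + c * (t + 1) := by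
        rw [Nat.mul_comm c (t+1)]; omega
      have hsx : ((s : ℕ) + 1) * c = (s : ℕ) * c + c := by ring
      omega
    obtain ⟨x, hx1, hx2, hx3⟩ := hdense ((a : ℕ) + (s : ℕ) * c) hwin
    exact ⟨x, hx1, hx2, hx3⟩
  choose g hg using hex
  have hmaps : ∀ s : Fin (t + 1), g s ∈ Q.filter (fun q => ∃ h : q < n, p (l.get ⟨q, h⟩) = true) := by
    intro s
    obtain ⟨hQ1, hQ2, hQ3⟩ := hg s
    have hgb : g s ≤ (b : ℕ) := by
      have h1 : ((s : ℕ) + 1) * c ≤ (t + 1) * c := Nat.mul_le_mul_right c (by omega)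
      have : (a : ℕ) + c * (t + 1) ≤ (b:ℕ) := hab
      rw [Nat.mul_comm c (t+1)] at this
      have hsx : ((s : ℕ) + 1) * c = (s : ℕ) * c + c := by ring
      omega
    have hgn : g s < n := lt_of_le_of_lt hgb b.isLt
    have hmem : (⟨g s, hgn⟩ : Fin n) ∈ A :=
      key _ (by rw [Fin.le_def]; simp only []; omega) (by rw [Fin.le_def]; exact hgb)
    exact Finset.mem_filter.mpr ⟨hQ1, ⟨hgn, (Finset.mem_filter.mp hmem).2⟩⟩
  have hinj : Set.InjOn g (Finset.univ : Finset (Fin (t+1))) := by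
    intro s1 _ s2 _ hgeq
    by_contra hne
    have hne' : (s1 : ℕ) ≠ (s2 : ℕ) := fun h => hne (Fin.ext h)
    rcases Nat.lt_or_ge (s1 : ℕ) (s2 : ℕ) with hlt' | hge
    · have h1 : ((s1 : ℕ) + 1) * c ≤ (s2 : ℕ) * c := Nat.mul_le_mul_right c (by omega)
      have h2 := (hg s1).2.2
      have h3 := (hg s2).2.1
      rw [hgeq] at h2
      have : (a:ℕ) + ((s1:ℕ)+1)*c ≤ (a:ℕ) + (s2:ℕ)*c := by omega
      rw [Nat.add_mul, Nat.one_mul] at this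
      omega
    · have hlt' : (s2 : ℕ) < (s1 : ℕ) := by omega
      have h1 : ((s2 : ℕ) + 1) * c ≤ (s1 : ℕ) * c := Nat.mul_le_mul_right c (by omega)
      have h2 := (hg s2).2.2
      have h3 := (hg s1).2.1
      rw [hgeq] at h3
      have : (a:ℕ) + ((s2:ℕ)+1)*c ≤ (a:ℕ) + (s1:ℕ)*c := by omega
      rw [Nat.add_mul, Nat.one_mul] at this
      omega
  have hcardle := Finset.card_le_card_of_injOn g (fun s _ => hmaps s) hinj
  simp only [Finset.card_univ, Fintype.card_fin] at hcardle
  omega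

open Classical in
lemma aux_samples {α : Type*} [LinearOrder α] {p' : ℕ} (S : Fin p' → List α)
    (hsorted : ∀ i, (S i).Pairwise (· < ·))
    (hdistinct : ((List.ofFn S).flatten).Nodup)
    (P : Fin p' → Finset ℕ)
    (V : List α) (hVnd : V.Nodup)
    (hVmem : ∀ x : α, x ∈ V ↔ ∃ i : Fin p', ∃ j ∈ P i,
      ∃ hj : j < (S i).length, (S i).get ⟨j, hj⟩ = x)
    (p : α → Bool) :
    ∑ i, ((P i).filter (fun q => ∃ h : q < (S i).length, p ((S i).get ⟨q, h⟩) = true)).card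
      ≤ (V.filter p).length := by
  classical
  set B : Fin p' → Finset α :=
    fun i => V.toFinset.filter (fun x => p x = true ∧ x ∈ S i) with hB
  have hdisj : ∀ (L : List (List α)), L = List.ofFn S → L.Pairwise List.Disjoint := by
    intro L hL
    subst hL
    exact (List.nodup_flatten.mp hdistinct).2
  have hdisj2 : ∀ i i' : Fin p', i ≠ i' → List.Disjoint (S i) (S i') := by
    intro i i' hne
    have hp := List.pairwise_ofFn.mp (hdisj _ rfl)
    rcases lt_or_gt_of_ne hne with h | h
    · exact hp h
    · exact (hp h).symm
  have step1 : ∀ i, ((P i).filter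
      (fun q => ∃ h : q < (S i).length, p ((S i).get ⟨q, h⟩) = true)).card ≤ (B i).card := by
    intro i
    rcases ((P i).filter (fun q => ∃ h : q < (S i).length, p ((S i).get ⟨q, h⟩) = true)).eq_empty_or_nonempty with he | ⟨q0, hq0⟩
    · rw [he]; simp
    have hq0' := Finset.mem_filter.mp hq0
    obtain ⟨hlen0, _⟩ := hq0'.2
    have hne : S i ≠ [] := List.ne_nil_of_length_pos (Nat.pos_of_ne_zero (by omega))
    set d := (S i).head hne with hd
    apply Finset.card_le_card_of_injOn (fun q => (S i).getD q d)
    · intro q hq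
      obtain ⟨hqP, hlt, hp⟩ := Finset.mem_filter.mp hq
      have hget : (S i).getD q d = (S i).get ⟨q, hlt⟩ := by
        rw [List.getD_eq_getElem?_getD, List.getElem?_eq_getElem hlt]; rfl
      rw [hB]
      refine Finset.mem_filter.mpr ⟨?_, ?_, ?_⟩
      · rw [List.mem_toFinset, hVmem]
        exact ⟨i, q, hqP, hlt, hget.symm⟩
      · beta_reduce; rw [hget]; exact hp
      · beta_reduce; rw [hget]; exact List.get_mem _ _
    · intro q1 hq1 q2 hq2 heq
      simp only [Finset.coe_filter, Set.mem_setOf_eq] at hq1 hq2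
      obtain ⟨_, h1, _⟩ := hq1
      obtain ⟨_, h2, _⟩ := hq2
      have sm : StrictMono (S i).get := fun a b hab => (hsorted i).rel_get_of_lt hab
      have e1 : (S i).getD q1 d = (S i).get ⟨q1, h1⟩ := by
        rw [List.getD_eq_getElem?_getD, List.getElem?_eq_getElem h1]; rfl
      have e2 : (S i).getD q2 d = (S i).get ⟨q2, h2⟩ := by
        rw [List.getD_eq_getElem?_getD, List.getElem?_eq_getElem h2]; rfl
      have heq' : (S i).getD q1 d = (S i).getD q2 d := heq
      rw [e1, e2] at heq'
      have := sm.injective heq'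
      exact congrArg Fin.val this
  have hdisjB : ∀ i ∈ (Finset.univ : Finset (Fin p')), ∀ i' ∈ Finset.univ, i ≠ i' →
      Disjoint (B i) (B i') := by
    intro i _ i' _ hne
    rw [Finset.disjoint_left]
    intro x hx hx'
    obtain ⟨_, _, hxi⟩ := Finset.mem_filter.mp hx
    obtain ⟨_, _, hxi'⟩ := Finset.mem_filter.mp hx'
    exact hdisj2 i i' hne hxi hxi'
  calc ∑ i, ((P i).filter
        (fun q => ∃ h : q < (S i).length, p ((S i).get ⟨q, h⟩) = true)).card
      ≤ ∑ i, (B i).card := Finset.sum_le_sum (fun i _ => step1 i)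
    _ = (Finset.univ.biUnion B).card := (Finset.card_biUnion hdisjB).symm
    _ ≤ (V.filter p).toFinset.card := by
        apply Finset.card_le_card
        intro x hx
        obtain ⟨i, hi⟩ := Finset.mem_biUnion.mp hx
        obtain ⟨_, hxB⟩ := hi
        obtain ⟨hxV, hpx, _⟩ := Finset.mem_filter.mp hxB
        rw [List.mem_toFinset] at hxV ⊢
        exact List.mem_filter.mpr ⟨hxV, hpx⟩
    _ = (V.filter p).length := List.toFinset_card_of_nodup (hVnd.filter p)
open Classical in
lemma aux_Vcount {α : Type*} [LinearOrder α] (V : List α) (hVs : V.Pairwise (· < ·))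
    (N r q : ℕ) (hN : V.length = N) (hNq : N = r * q) (hq : 0 < q) (hr : 0 < r)
    (f : ℕ → α)
    (hf : ∀ j : ℕ, 1 ≤ j → j ≤ r - 1 → ∀ hidx : j * N / r - 1 < V.length,
        f j = V.get ⟨j * N / r - 1, hidx⟩)
    (j : ℕ) (hj : j < r) :
    (V.filter (fun s => decide ((j = 0 ∨ f j < s) ∧ (j = r - 1 ∨ s ≤ f (j + 1))))).length
      ≤ q := by
  classical
  have sm : StrictMono V.get := fun a b hab => hVs.rel_get_of_lt hab
  have hjq : ∀ jj : ℕ, jj * N / r = jj * q := by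
    intro jj
    rw [hNq, show jj * (r * q) = jj * q * r by ring, Nat.mul_div_cancel _ hr]
  have hqN : q ≤ N := by rw [hNq]; exact Nat.le_mul_of_pos_left q hr
  rw [aux_length_filter]
  by_cases h0 : j = 0 <;> by_cases hlast : j = r - 1
  · -- r = 1 : predicate is trivially true
    have hr1 : r = 1 := by omega
    have hNeq : N = q := by rw [hNq, hr1, one_mul]
    calc (Finset.univ.filter _).card ≤ (Finset.univ : Finset (Fin V.length)).card :=
          Finset.card_le_card (Finset.filter_subset _ _)
      _ = V.length := by simp
      _ = q := by rw [hN, hNeq]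
  · -- j = 0, r ≥ 2 : predicate is s ≤ f 1
    have hr2 : 2 ≤ r := by omega
    have hidx : 1 * N / r - 1 < V.length := by rw [hjq, hN]; omega
    have hf1 : f 1 = V.get ⟨1 * N / r - 1, hidx⟩ := hf 1 le_rfl (by omega) hidx
    have hcongr : Finset.univ.filter (fun i : Fin V.length =>
          (decide ((j = 0 ∨ f j < V.get i) ∧ (j = r - 1 ∨ V.get i ≤ f (j + 1)))) = true)
        = Finset.univ.filter (fun i : Fin V.length => (i : ℕ) < q) := by
      apply Finset.filter_congr
      intro i _
      simp only [decide_eq_true_eq]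
      subst h0
      constructor
      · rintro ⟨-, h⟩
        rcases h with h | h
        · omega
        · rw [hf1] at h
          have := sm.le_iff_le.mp h
          rw [Fin.le_def] at this
          simp only [hjq] at this ⊢
          omega
      · intro hi
        refine ⟨Or.inl rfl, Or.inr ?_⟩
        rw [hf1]
        apply sm.monotone
        rw [Fin.le_def]
        simp only [hjq]
        omega
    rw [hcongr, card_filter_fin V.length (fun t => t < q)]
    have : (Finset.range V.length).filter (fun t => t < q) = Finset.range q := by
      ext x; simp; omega
    rw [this, Finset.card_range]
  · -- j = r - 1, j ≠ 0 : predicate is f j < s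
    have hj1 : 1 ≤ j := by omega
    have hidx : j * N / r - 1 < V.length := by
      rw [hjq, hN, hNq]
      have : j * q ≤ r * q := Nat.mul_le_mul_right q (by omega)
      have : 1 * 1 ≤ j * q := Nat.mul_le_mul hj1 hq
      omega
    have hfj : f j = V.get ⟨j * N / r - 1, hidx⟩ := hf j hj1 (by omega) hidx
    have hcongr : Finset.univ.filter (fun i : Fin V.length =>
          (decide ((j = 0 ∨ f j < V.get i) ∧ (j = r - 1 ∨ V.get i ≤ f (j + 1)))) = true)
        = Finset.univ.filter (fun i : Fin V.length => j * q - 1 < (i : ℕ)) := by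
      apply Finset.filter_congr
      intro i _
      simp only [decide_eq_true_eq]
      constructor
      · rintro ⟨h, -⟩
        rcases h with h | h
        · omega
        · rw [hfj] at h
          have := sm.lt_iff_lt.mp h
          rw [Fin.lt_def] at this
          simp only [hjq] at this
          omega
      · intro hi
        refine ⟨Or.inr ?_, Or.inl hlast⟩
        rw [hfj]
        apply sm
        rw [Fin.lt_def]
        simp only [hjq]
        omega
    rw [hcongr, card_filter_fin V.length (fun t => j * q - 1 < t)]
    have hrq : (r - 1) * q + q = r * q := by
      have : r - 1 + 1 = r := by omega
      calc (r - 1) * q + q = (r - 1 + 1) * q := by ring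
        _ = r * q := by rw [this]
    have hjq1 : 1 * 1 ≤ j * q := Nat.mul_le_mul hj1 hq
    have : (Finset.range V.length).filter (fun t => j * q - 1 < t)
        = Finset.Ico (j * q) N := by
      ext x; simp [hN]; omega
    rw [this, Nat.card_Ico]
    subst hlast
    omega
  · -- middle : f j < s ≤ f (j+1)
    have hj1 : 1 ≤ j := by omega
    have hj2 : j + 1 ≤ r - 1 := by omega
    have hmul : (j + 1) * q = j * q + q := by ring
    have hle1 : (j + 1) * q ≤ r * q := Nat.mul_le_mul_right q (by omega)
    have hjq1 : 1 * 1 ≤ j * q := Nat.mul_le_mul hj1 hq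
    have hidx : j * N / r - 1 < V.length := by
      rw [hjq, hN, hNq]; omega
    have hidx2 : (j + 1) * N / r - 1 < V.length := by
      rw [hjq, hN, hNq]; omega
    have hfj : f j = V.get ⟨j * N / r - 1, hidx⟩ := hf j hj1 (by omega) hidx
    have hfj2 : f (j + 1) = V.get ⟨(j + 1) * N / r - 1, hidx2⟩ := hf (j + 1) (by omega) hj2 hidx2
    have hcongr : Finset.univ.filter (fun i : Fin V.length =>
          (decide ((j = 0 ∨ f j < V.get i) ∧ (j = r - 1 ∨ V.get i ≤ f (j + 1)))) = true)
        = Finset.univ.filter (fun i : Fin V.length =>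
            j * q - 1 < (i : ℕ) ∧ (i : ℕ) ≤ (j + 1) * q - 1) := by
      apply Finset.filter_congr
      intro i _
      simp only [decide_eq_true_eq]
      constructor
      · rintro ⟨h1, h2⟩
        constructor
        · rcases h1 with h | h
          · omega
          · rw [hfj] at h
            have := sm.lt_iff_lt.mp h
            rw [Fin.lt_def] at this
            simp only [hjq] at this
            omega
        · rcases h2 with h | h
          · omega
          · rw [hfj2] at h
            have := sm.le_iff_le.mp h
            rw [Fin.le_def] at this
            simp only [hjq] at this
            omega
      · rintro ⟨h1, h2⟩
        constructor
        · refine Or.inr ?_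
          rw [hfj]
          apply sm
          rw [Fin.lt_def]
          simp only [hjq]
          omega
        · refine Or.inr ?_
          rw [hfj2]
          apply sm.monotone
          rw [Fin.le_def]
          simp only [hjq]
          omega
    rw [hcongr, card_filter_fin V.length (fun t => j * q - 1 < t ∧ t ≤ (j + 1) * q - 1)]
    have : (Finset.range V.length).filter (fun t => j * q - 1 < t ∧ t ≤ (j + 1) * q - 1)
        = Finset.Ico (j * q) ((j + 1) * q) := by
      ext x; simp [hN, hNq]; omega
    rw [this, Nat.card_Ico]
    omega




/-- **String-based partitioning without the divisibility assumption.**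
As in the single-level string-based partitioning theorem, but
`ω := m/(p'(v+1))` is a rational number (not assumed integral), samples are
drawn with spacing `⌈ω⌉` (the sets `P i` are `⌈ω⌉`-dense), and
`m ≥ k·p'(v+1)` (i.e. `ω ≥ k`).  Then every bucket contains at most
`(1 + r/v)·(1 + 1/k)·m/r` elements. -/
theorem string_based_partitioning_general {α : Type*} [LinearOrder α]
    (p' v r m k : ℕ) (hp' : 0 < p') (hv : 0 < v) (hr : 0 < r) (hk : 0 < k)
    (S : Fin p' → List α)
    (hsorted : ∀ i, (S i).Pairwise (· < ·))
    (hdistinct : ((List.ofFn S).flatten).Nodup)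
    (hm : m = ∑ i, (S i).length)
    (hdvd : r ∣ p' * (v + 1))
    (hmk : k * (p' * (v + 1)) ≤ m)
    (c : ℕ) (hc : c = ⌈(m : ℚ) / ((p' : ℚ) * ((v : ℚ) + 1))⌉₊)
    (P : Fin p' → Finset ℕ)
    (hPsub : ∀ i, P i ⊆ Finset.range (S i).length)
    (hdense : ∀ i, ∀ a : ℕ, a + c ≤ (S i).length → ∃ x ∈ P i, a ≤ x ∧ x < a + c)
    (hcard : ∑ i, (P i).card = p' * (v + 1))
    (V : List α)
    (hVsorted : V.Pairwise (· < ·))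
    (hVlen : V.length = p' * (v + 1))
    (hVmem : ∀ x : α, x ∈ V ↔ ∃ i : Fin p', ∃ j ∈ P i,
      ∃ hj : j < (S i).length, (S i).get ⟨j, hj⟩ = x)
    (f : ℕ → α)
    (hf : ∀ j : ℕ, 1 ≤ j → j ≤ r - 1 →
      ∀ hidx : j * (p' * (v + 1)) / r - 1 < V.length,
        f j = V.get ⟨j * (p' * (v + 1)) / r - 1, hidx⟩)
    (j : ℕ) (hj : j < r) :
    ((((List.ofFn S).flatten).filter
        (fun s => decide ((j = 0 ∨ f j < s) ∧ (j = r - 1 ∨ s ≤ f (j + 1))))).length : ℝ)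
      ≤ (1 + (r : ℝ) / (v : ℝ)) * (1 + 1 / (k : ℝ)) * (m : ℝ) / (r : ℝ) := by
  classical
  obtain ⟨q, hNq⟩ := hdvd
  have hNpos : 0 < p' * (v + 1) := Nat.mul_pos hp' (by omega)
  have hqpos : 0 < q := by
    rcases Nat.eq_zero_or_pos q with h | h
    · rw [h, Nat.mul_zero] at hNq; omega
    · exact h
  have hmpos : 0 < m := lt_of_lt_of_le (Nat.mul_pos hk hNpos) hmk
  have hcpos : 0 < c := by
    rw [hc]
    apply Nat.ceil_pos.mpr
    have h1 : (0:ℚ) < (m:ℚ) := by exact_mod_cast hmpos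
    have h2 : (0:ℚ) < (p':ℚ) * ((v:ℚ) + 1) := by
      have : (0:ℚ) < (p':ℚ) := by exact_mod_cast hp'
      have : (0:ℚ) < (v:ℚ) + 1 := by positivity
      positivity
    positivity
  set p : α → Bool :=
    fun s => decide ((j = 0 ∨ f j < s) ∧ (j = r - 1 ∨ s ≤ f (j + 1))) with hp
  have hconv : ∀ x y z : α, x ≤ y → y ≤ z → p x = true → p z = true → p y = true := by
    intro x y z hxy hyz hx hz
    simp only [hp, decide_eq_true_eq] at hx hz ⊢
    obtain ⟨hx1, _⟩ := hx
    obtain ⟨_, hz2⟩ := hz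
    constructor
    · rcases hx1 with h | h
      · exact Or.inl h
      · exact Or.inr (lt_of_lt_of_le h hxy)
    · rcases hz2 with h | h
      · exact Or.inl h
      · exact Or.inr (le_trans hyz h)
  have hsplit : (((List.ofFn S).flatten).filter p).length = ∑ i, ((S i).filter p).length := by
    rw [List.filter_flatten, List.map_ofFn, List.length_flatten, List.map_ofFn, List.sum_ofFn]
    rfl
  set t : Fin p' → ℕ := fun i =>
    ((P i).filter (fun q => ∃ h : q < (S i).length, p ((S i).get ⟨q, h⟩) = true)).card with htdef
  have hwin : ∀ i, ((S i).filter p).length ≤ c * (t i + 1) := fun i =>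
    aux_window (S i) (hsorted i) p hconv c hcpos (P i) (hdense i)
  have hsum1 : (((List.ofFn S).flatten).filter p).length ≤ c * (∑ i, t i + p') := by
    rw [hsplit]
    calc ∑ i, ((S i).filter p).length ≤ ∑ i, c * (t i + 1) :=
          Finset.sum_le_sum fun i _ => hwin i
      _ = c * (∑ i, t i + p') := by
          rw [← Finset.mul_sum]
          congr 1
          rw [Finset.sum_add_distrib, Finset.sum_const, Finset.card_univ, Fintype.card_fin,
            smul_eq_mul, mul_one]
  have hsamples : ∑ i, t i ≤ (V.filter p).length :=
    aux_samples S hsorted hdistinct P V hVsorted.nodup hVmem p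
  have hVc : (V.filter p).length ≤ q :=
    aux_Vcount V hVsorted (p' * (v + 1)) r q hVlen hNq hqpos hr f hf j hj
  have hnat : (((List.ofFn S).flatten).filter p).length ≤ c * (q + p') :=
    le_trans hsum1 (Nat.mul_le_mul_left c (by omega))
  have hcast : ((((List.ofFn S).flatten).filter p).length : ℝ)
      ≤ (c : ℝ) * ((q : ℝ) + (p' : ℝ)) := by
    calc ((((List.ofFn S).flatten).filter p).length : ℝ) ≤ ((c * (q + p') : ℕ) : ℝ) :=
          Nat.cast_le.mpr hnat
      _ = (c : ℝ) * ((q : ℝ) + (p' : ℝ)) := by push_cast; ring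
  refine le_trans hcast ?_
  -- real arithmetic
  have hRpos : (0:ℝ) < (r:ℝ) := by exact_mod_cast hr
  have hVpos : (0:ℝ) < (v:ℝ) := by exact_mod_cast hv
  have hKpos : (0:ℝ) < (k:ℝ) := by exact_mod_cast hk
  have hPpos : (0:ℝ) < (p':ℝ) := by exact_mod_cast hp'
  have hQpos : (0:ℝ) < (q:ℝ) := by exact_mod_cast hqpos
  have hMpos : (0:ℝ) < (m:ℝ) := by exact_mod_cast hmpos
  have hNNpos : (0:ℝ) < (p':ℝ) * ((v:ℝ) + 1) := by positivity
  have hNNrq : (p':ℝ) * ((v:ℝ) + 1) = (r:ℝ) * (q:ℝ) := by exact_mod_cast hNq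
  have hKM : (k:ℝ) * ((p':ℝ) * ((v:ℝ) + 1)) ≤ (m:ℝ) := by exact_mod_cast hmk
  have hcub : (c:ℝ) ≤ (m:ℝ) / ((p':ℝ) * ((v:ℝ) + 1)) * (1 + 1/(k:ℝ)) := by
    have h1 : (c:ℚ) < (m:ℚ)/((p':ℚ)*((v:ℚ)+1)) + 1 := by
      rw [hc]
      apply Nat.ceil_lt_add_one
      positivity
    have h1R : (c:ℝ) < (m:ℝ) / ((p':ℝ) * ((v:ℝ) + 1)) + 1 := by
      have := (Rat.cast_lt (K := ℝ)).mpr h1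
      push_cast at this
      convert this using 2
    have h2 : (k:ℝ) ≤ (m:ℝ) / ((p':ℝ) * ((v:ℝ) + 1)) := by
      rw [le_div_iff₀ hNNpos]; linarith
    have h3 : (1:ℝ) ≤ (m:ℝ) / ((p':ℝ) * ((v:ℝ) + 1)) / (k:ℝ) := by
      rw [le_div_iff₀ hKpos]
      have hk1 : (1:ℝ) ≤ (k:ℝ) := by exact_mod_cast hk
      linarith
    have h4 : (m:ℝ) / ((p':ℝ) * ((v:ℝ) + 1)) * (1 + 1/(k:ℝ))
        = (m:ℝ) / ((p':ℝ) * ((v:ℝ) + 1)) + (m:ℝ) / ((p':ℝ) * ((v:ℝ) + 1)) / (k:ℝ) := by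
      ring
    linarith
  have e1 : (q:ℝ) / ((p':ℝ) * ((v:ℝ) + 1)) = 1 / (r:ℝ) := by
    rw [hNNrq]
    rw [div_eq_div_iff (by positivity) (ne_of_gt hRpos)]
    ring
  have e2 : (p':ℝ) / ((p':ℝ) * ((v:ℝ) + 1)) = 1 / ((v:ℝ) + 1) := by
    field_simp
  have rhs_eq : (1 + (r:ℝ)/(v:ℝ)) * (1 + 1/(k:ℝ)) * (m:ℝ) / (r:ℝ)
      = (m:ℝ) * (1 + 1/(k:ℝ)) * (1/(r:ℝ) + 1/(v:ℝ)) := by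
    field_simp
  have lhs_eq : (m:ℝ) / ((p':ℝ) * ((v:ℝ) + 1)) * (1 + 1/(k:ℝ)) * ((q:ℝ) + (p':ℝ))
      = (m:ℝ) * (1 + 1/(k:ℝ))
        * ((q:ℝ) / ((p':ℝ) * ((v:ℝ) + 1)) + (p':ℝ) / ((p':ℝ) * ((v:ℝ) + 1))) := by
    ring
  have hmono : 1/((v:ℝ)+1) ≤ 1/(v:ℝ) := by
    apply one_div_le_one_div_of_le hVpos
    linarith
  have hMK : (0:ℝ) ≤ (m:ℝ) * (1 + 1/(k:ℝ)) := by positivity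
  calc (c:ℝ) * ((q:ℝ) + (p':ℝ))
      ≤ (m:ℝ) / ((p':ℝ) * ((v:ℝ) + 1)) * (1 + 1/(k:ℝ)) * ((q:ℝ) + (p':ℝ)) := by
        apply mul_le_mul_of_nonneg_right hcub (by positivity)
    _ = (m:ℝ) * (1 + 1/(k:ℝ)) * (1/(r:ℝ) + 1/((v:ℝ)+1)) := by
        rw [lhs_eq, e1, e2]
    _ ≤ (m:ℝ) * (1 + 1/(k:ℝ)) * (1/(r:ℝ) + 1/(v:ℝ)) := by
        apply mul_le_mul_of_nonneg_left _ hMK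
        linarith
    _ = (1 + (r:ℝ)/(v:ℝ)) * (1 + 1/(k:ℝ)) * (m:ℝ) / (r:ℝ) := rhs_eq.symm
end

section
/- Let Σ be a finite alphabet with |Σ| = σ ≥ 1 and let S be a finite set of n ≥ 2 pairwise distinct strings over Σ such that no string in S is a proper prefix of another string in S. Let d(s) := 1 + max_{t ∈ S, t ≠ s} lcp(s,t) and let D := ∑_{s ∈ S} d(s) be the total length of all distinguishing prefixes. Then D ≥ n·(⌊log(n)/log(σ+1)⌋ − 1). -/
/-- Length of the longest common prefix of two lists. -/
def lcpLen {α : Type*} [DecidableEq α] : List α → List α → ℕ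
  | a :: s, b :: t => if a = b then lcpLen s t + 1 else 0
  | _, _ => 0

/-- Distinguishing prefix length of `s` within `S`:
`d(s) = 1 + max_{t ∈ S, t ≠ s} lcp(s, t)`. -/
def distPrefixLen {α : Type*} [DecidableEq α] (S : Finset (List α)) (s : List α) : ℕ :=
  1 + (S.erase s).sup (fun t => lcpLen s t)

lemma lcpLen_ge {α : Type*} [DecidableEq α] :
    ∀ (j : ℕ) (s t : List α), (∀ i, i < j → s[i]? = t[i]?) →
      j ≤ lcpLen s t ∨ s <+: t ∨ t <+: s
  | 0, _, _, _ => Or.inl (Nat.zero_le _)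
  | j+1, [], t, _ => Or.inr (Or.inl List.nil_prefix)
  | j+1, a::s, [], _ => Or.inr (Or.inr List.nil_prefix)
  | j+1, a::s, b::t, h => by
      have h0 := h 0 (Nat.succ_pos _)
      simp only [List.getElem?_cons_zero] at h0
      have hab : a = b := by exact Option.some.inj h0
      subst hab
      have h' : ∀ i, i < j → s[i]? = t[i]? := fun i hi => by simpa using h (i+1) (by omega)
      rcases lcpLen_ge j s t h' with h1 | h1 | h1
      · left; rw [show lcpLen (a::s) (a::t) = lcpLen s t + 1 from by simp [lcpLen]]; show j + 1 ≤ lcpLen s t + 1; omega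
      · right; left; obtain ⟨u, hu⟩ := h1; exact ⟨u, by simp [hu]⟩
      · right; right; obtain ⟨u, hu⟩ := h1; exact ⟨u, by simp [hu]⟩

lemma count_le_pow {α : Type*} [DecidableEq α] [Fintype α]
    (σ : ℕ) (hσcard : Fintype.card α = σ)
    (S : Finset (List α))
    (hpref : ∀ s ∈ S, ∀ t ∈ S, s ≠ t → ¬ s <+: t) (j : ℕ) :
    (S.filter (fun s => distPrefixLen S s ≤ j)).card ≤ (σ + 1) ^ j := by
  have hcard : Fintype.card (Fin j → Option α) = (σ + 1) ^ j := by
    simp [Fintype.card_option, hσcard]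
  rw [← hcard, ← Finset.card_univ]
  apply Finset.card_le_card_of_injOn (fun s => fun i : Fin j => s[(i : ℕ)]?)
    (fun _ _ => Finset.mem_univ _)
  intro s hs t ht hst
  by_contra hne
  simp only [Finset.mem_coe, Finset.mem_filter] at hs ht
  have hget : ∀ i, i < j → s[i]? = t[i]? := by
    intro i hi
    exact congrFun hst ⟨i, hi⟩
  rcases lcpLen_ge j s t hget with h1 | h1 | h1
  · have htm : t ∈ S.erase s := Finset.mem_erase.mpr ⟨fun h => hne h.symm, ht.1⟩
    have : lcpLen s t ≤ (S.erase s).sup (fun t => lcpLen s t) :=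
      Finset.le_sup htm
    have := hs.2
    unfold distPrefixLen at this
    omega
  · exact hpref s hs.1 t ht.1 hne h1
  · exact hpref t ht.1 s hs.1 (fun h => hne h.symm) h1

lemma myGeomSum_le {σ : ℕ} (hσ : 1 ≤ σ) :
    ∀ k, ∑ j ∈ Finset.range k, (σ + 1) ^ j ≤ (σ + 1) ^ k
  | 0 => by simp
  | k+1 => by
    rw [Finset.sum_range_succ, pow_succ]
    have := myGeomSum_le hσ k
    nlinarith [pow_pos (by omega : 0 < σ + 1) k]

/-- **The total distinguishing prefix length is `Ω(n log n / log σ)`.**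
For a finite alphabet of size `σ ≥ 1` and a finite set `S` of `n ≥ 2` pairwise
distinct strings in which no string is a proper prefix of another, the total
distinguishing prefix length `D = ∑_{s ∈ S} d(s)` satisfies
`D ≥ n·(⌊log n / log (σ+1)⌋ − 1)`. -/
theorem total_dist_prefix_lower_bound {α : Type*} [DecidableEq α] [Fintype α]
    (σ : ℕ) (hσcard : Fintype.card α = σ) (hσ : 1 ≤ σ)
    (S : Finset (List α)) (n : ℕ) (hn : S.card = n) (hn2 : 2 ≤ n)
    (hpref : ∀ s ∈ S, ∀ t ∈ S, s ≠ t → ¬ s <+: t)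
    (D : ℕ) (hD : D = ∑ s ∈ S, distPrefixLen S s) :
    (n : ℝ) * ((⌊Real.log (n : ℝ) / Real.log ((σ : ℝ) + 1)⌋ : ℝ) - 1) ≤ (D : ℝ) := by
  set x : ℝ := Real.log (n : ℝ) / Real.log ((σ : ℝ) + 1) with hx
  have hlogσ : 0 < Real.log ((σ : ℝ) + 1) := by
    apply Real.log_pos
    have : (1 : ℝ) ≤ (σ : ℝ) := by exact_mod_cast hσ
    linarith
  have hlogn : 0 ≤ Real.log (n : ℝ) := by
    apply Real.log_nonneg
    have : (2 : ℝ) ≤ (n : ℝ) := by exact_mod_cast hn2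
    linarith
  have hx0 : 0 ≤ x := div_nonneg hlogn hlogσ.le
  have hfl0 : 0 ≤ ⌊x⌋ := Int.le_floor.mpr (by exact_mod_cast hx0)
  set k : ℕ := (⌊x⌋).toNat with hk
  have hflk : (⌊x⌋ : ℝ) = (k : ℝ) := by
    rw [hk]; exact_mod_cast (Int.toNat_of_nonneg hfl0).symm
  -- (σ+1)^k ≤ n
  have hpowk : (σ + 1) ^ k ≤ n := by
    have hkx : (k : ℝ) ≤ x := by rw [← hflk]; exact Int.floor_le x
    have hklog : (k : ℝ) * Real.log ((σ : ℝ) + 1) ≤ Real.log (n : ℝ) := by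
      rw [hx] at hkx
      calc (k : ℝ) * Real.log ((σ : ℝ) + 1)
          ≤ (Real.log (n : ℝ) / Real.log ((σ : ℝ) + 1)) * Real.log ((σ : ℝ) + 1) := by
            exact mul_le_mul_of_nonneg_right hkx hlogσ.le
        _ = Real.log (n : ℝ) := div_mul_cancel₀ _ hlogσ.ne'
    have hppos : (0 : ℝ) < ((σ : ℝ) + 1) ^ k := by positivity
    have hnpos : (0 : ℝ) < (n : ℝ) := by
      have : (2 : ℝ) ≤ (n : ℝ) := by exact_mod_cast hn2
      linarith
    have : ((σ : ℝ) + 1) ^ k ≤ (n : ℝ) := by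
      rw [← Real.log_le_log_iff hppos hnpos, Real.log_pow]
      exact_mod_cast hklog
    exact_mod_cast this
  -- the ℕ inequality: n * k ≤ D + n
  have key : n * k ≤ D + n := by
    have hsplit : ∀ j : ℕ, (S.filter (fun s => j < distPrefixLen S s)).card
        + (S.filter (fun s => distPrefixLen S s ≤ j)).card = n := by
      intro j
      rw [← hn]
      have := Finset.card_filter_add_card_filter_not
        (s := S) (p := fun s => j < distPrefixLen S s)
      simpa [not_lt] using this
    have hswap : ∑ j ∈ Finset.range k, (S.filter (fun s => j < distPrefixLen S s)).card ≤ D := by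
      rw [hD]
      calc ∑ j ∈ Finset.range k, (S.filter (fun s => j < distPrefixLen S s)).card
          = ∑ j ∈ Finset.range k, ∑ s ∈ S, if j < distPrefixLen S s then 1 else 0 :=
            Finset.sum_congr rfl fun j _ => Finset.card_filter _ _
        _ = ∑ s ∈ S, ∑ j ∈ Finset.range k, if j < distPrefixLen S s then 1 else 0 :=
            Finset.sum_comm
        _ ≤ ∑ s ∈ S, distPrefixLen S s := by
            apply Finset.sum_le_sum
            intro s _
            rw [← Finset.card_filter]
            calc ((Finset.range k).filter (fun j => j < distPrefixLen S s)).card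
                ≤ (Finset.range (distPrefixLen S s)).card := by
                  apply Finset.card_le_card
                  intro j hj
                  simp only [Finset.mem_filter, Finset.mem_range] at hj ⊢
                  exact hj.2
              _ = distPrefixLen S s := Finset.card_range _
    have hcount := fun j => count_le_pow σ hσcard S hpref j
    have hsum : n * k ≤ (∑ j ∈ Finset.range k, (S.filter (fun s => j < distPrefixLen S s)).card)
        + ∑ j ∈ Finset.range k, (σ + 1) ^ j := by
      rw [← Finset.sum_add_distrib]
      calc n * k = ∑ _j ∈ Finset.range k, n := by rw [Finset.sum_const, Finset.card_range, smul_eq_mul, mul_comm]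
        _ ≤ _ := by
            apply Finset.sum_le_sum
            intro j _
            have := hsplit j
            have := hcount j
            omega
    have hg := myGeomSum_le hσ k
    omega
  -- conclude in ℝ
  rw [hflk]
  have : (n : ℝ) * (k : ℝ) ≤ (D : ℝ) + (n : ℝ) := by exact_mod_cast key
  nlinarith
end

section
/- Let m > 0 be a real number, let r ≥ 1 be an integer, and define f : [0,∞) → ℝ by f(x) = x·(log₂(m/x) + 2) for x > 0 and f(0) = 0. Then for all nonnegative real numbers x₁,…,x_r and every real number s with ∑_{j=1}^r x_j ≤ s ≤ m·r and s > 0, it holds that ∑_{j=1}^r f(x_j) ≤ s·(log₂(m·r/s) + 2). -/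
/-- **Concavity bound for the Elias–Fano encoding size.**
Let `f x = x·(log₂(m/x) + 2)` for `x > 0` and `f 0 = 0` (the number of bits
needed to Elias–Fano encode `x` hash values out of a range of size `m`).
Then for nonnegative reals `x 1, …, x r` and any real `s` with
`∑ x j ≤ s ≤ m·r` and `s > 0`, we have
`∑ f (x j) ≤ s·(log₂(m·r/s) + 2)`. -/
theorem elias_fano_concavity_bound (m : ℝ) (hm : 0 < m) (r : ℕ) (hr : 1 ≤ r)
    (f : ℝ → ℝ)
    (hf : ∀ x : ℝ, 0 < x → f x = x * (Real.logb 2 (m / x) + 2))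
    (hf0 : f 0 = 0)
    (x : ℕ → ℝ) (hx : ∀ j < r, 0 ≤ x j)
    (s : ℝ) (hs0 : 0 < s)
    (hsum : ∑ j ∈ Finset.range r, x j ≤ s) (hsm : s ≤ m * r) :
    ∑ j ∈ Finset.range r, f (x j) ≤ s * (Real.logb 2 (m * r / s) + 2) := by
  have hr' : (0:ℝ) < r := by positivity
  have hlog2 : (0:ℝ) < Real.log 2 := Real.log_pos (by norm_num)
  have hlog2' : (1:ℝ)/2 < Real.log 2 := by
    have := Real.log_two_gt_d9; linarith
  set L : ℝ := Real.logb 2 (m * r / s) with hL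
  have hL0 : 0 ≤ L := Real.logb_nonneg (by norm_num) ((one_le_div hs0).mpr hsm)
  -- pointwise bound via `log t ≤ t - 1`
  have key : ∀ j ∈ Finset.range r,
      f (x j) ≤ x j * (L + 2) + (s / r - x j) / Real.log 2 := by
    intro j hj
    have hxj : 0 ≤ x j := hx j (Finset.mem_range.mp hj)
    rcases eq_or_lt_of_le hxj with h0 | hpos
    · rw [← h0, hf0]
      have h0' : 0 ≤ (s / r) / Real.log 2 := by positivity
      simpa using h0'
    · rw [hf _ hpos]
      have hse : m / x j = (m * r / s) * (s / (r * x j)) := by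
        field_simp
      have hpos1 : (0:ℝ) < m * r / s := by positivity
      have hpos2 : (0:ℝ) < s / (r * x j) := by positivity
      have hsplit : Real.logb 2 (m / x j) = L + Real.logb 2 (s / (r * x j)) := by
        rw [hse, Real.logb_mul (ne_of_gt hpos1) (ne_of_gt hpos2)]
      rw [hsplit]
      have hln : Real.log (s / (r * x j)) ≤ s / (r * x j) - 1 :=
        Real.log_le_sub_one_of_pos hpos2
      have hmul : x j * Real.log (s / (r * x j)) ≤ s / r - x j := by
        have h1 := mul_le_mul_of_nonneg_left hln hxj
        have heq : x j * (s / (r * x j) - 1) = s / r - x j := by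
          field_simp
        linarith [heq ▸ h1]
      have hstep : x j * Real.logb 2 (s / (r * x j)) ≤ (s / r - x j) / Real.log 2 := by
        rw [Real.logb, ← mul_div_assoc]
        gcongr
      nlinarith [hstep]
  have hsum2 : ∑ j ∈ Finset.range r, f (x j) ≤
      ∑ j ∈ Finset.range r, (x j * (L + 2) + (s / r - x j) / Real.log 2) :=
    Finset.sum_le_sum key
  have hsplit : ∑ j ∈ Finset.range r, (x j * (L + 2) + (s / r - x j) / Real.log 2)
      = (∑ j ∈ Finset.range r, x j) * (L + 2)
        + (s - ∑ j ∈ Finset.range r, x j) / Real.log 2 := by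
    rw [Finset.sum_add_distrib, ← Finset.sum_mul, ← Finset.sum_div,
      Finset.sum_sub_distrib, Finset.sum_const, Finset.card_range]
    congr 2
    rw [nsmul_eq_mul, mul_div_assoc', mul_comm, mul_div_assoc, div_self hr'.ne', mul_one]
  rw [hsplit] at hsum2
  set T := ∑ j ∈ Finset.range r, x j with hT
  have hinv : (s - T) / Real.log 2 ≤ (s - T) * 2 := by
    rw [div_le_iff₀ hlog2]
    nlinarith [hsum]
  nlinarith [mul_le_mul_of_nonneg_right hsum (by linarith : (0:ℝ) ≤ L + 2)]
end
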